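/- arXiv:1312.1110 — 6 statements merged into one kernel-verified Lean document; each statement's English description precedes it below -/
import Mathlib

section
/- Let G be the cubic graph obtained from the disjoint union of four copies of K⁺₃₃ and two adjacent vertices u and v, joining each of u and v to the two degree-2 vertices of two of the copies. Then G has 45 edges and ν_s(G) = 5. -/
open SimpleGraph

/-- An induced matching: a set of edges such that any two vertices incident with
distinct edges have distance at least 2 (i.e. are distinct and non-adjacent). -/
def IsInducedMatching {V : Type} (G : SimpleGraph V) (M : Set (Sym2 V)) : Prop :=
  M ⊆ G.edgeSet ∧
    ∀ e ∈ M, ∀ f ∈ M, e ≠ f → ∀ u ∈ e, ∀ v ∈ f, u ≠ v ∧ ¬ G.Adj u v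

/-- The strong matching number: maximum size of an induced matching. -/
noncomputable def nu_s {V : Type} (G : SimpleGraph V) : ℕ :=
  sSup {k | ∃ M : Set (Sym2 V), IsInducedMatching G M ∧ M.ncard = k}

/-- The number of isolated vertices. -/
noncomputable def isolCount {V : Type} (G : SimpleGraph V) : ℕ :=
  {v : V | ∀ w, ¬ G.Adj v w}.ncard

/-- K₃,₃ (parts {0,1,2} and {3,4,5}) with the edge 0-3 subdivided by the new vertex 6. -/
def K33plus : SimpleGraph (Fin 7) :=
  SimpleGraph.fromEdgeSet
    {s(0,4), s(0,5), s(1,3), s(1,4), s(1,5), s(2,3), s(2,4), s(2,5), s(0,6), s(3,6)}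

/-- The number of connected components isomorphic to K₃,₃⁺. -/
noncomputable def n33plus {V : Type} (G : SimpleGraph V) : ℕ :=
  {c : G.ConnectedComponent | Nonempty (G.induce c.supp ≃g K33plus)}.ncard

/-- The cubic graph from four copies of K₃,₃⁺ plus two adjacent vertices u, v,
with u joined to the degree-2 vertices (vertex 6 of each copy) of copies 0 and 1,
and v joined to those of copies 2 and 3. -/
def G45 : SimpleGraph ((Fin 4 × Fin 7) ⊕ Fin 2) :=
  SimpleGraph.fromEdgeSet
    ({e | ∃ (c : Fin 4) (a b : Fin 7), K33plus.Adj a b ∧ e = s(Sum.inl (c, a), Sum.inl (c, b))}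
      ∪ {s(Sum.inr 0, Sum.inl (0, (6 : Fin 7))),
         s(Sum.inr 0, Sum.inl (1, (6 : Fin 7))),
         s(Sum.inr 1, Sum.inl (2, (6 : Fin 7))),
         s(Sum.inr 1, Sum.inl (3, (6 : Fin 7))),
         s(Sum.inr 0, Sum.inr 1)})

/-! ### Auxiliary decidability machinery -/

/-- Explicit adjacency predicate for `K33plus`. -/
def K33P : Fin 7 → Fin 7 → Prop := fun a b =>
  (a = 0 ∧ b = 4) ∨ (a = 4 ∧ b = 0) ∨ (a = 0 ∧ b = 5) ∨ (a = 5 ∧ b = 0) ∨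
  (a = 1 ∧ b = 3) ∨ (a = 3 ∧ b = 1) ∨ (a = 1 ∧ b = 4) ∨ (a = 4 ∧ b = 1) ∨
  (a = 1 ∧ b = 5) ∨ (a = 5 ∧ b = 1) ∨ (a = 2 ∧ b = 3) ∨ (a = 3 ∧ b = 2) ∨
  (a = 2 ∧ b = 4) ∨ (a = 4 ∧ b = 2) ∨ (a = 2 ∧ b = 5) ∨ (a = 5 ∧ b = 2) ∨
  (a = 0 ∧ b = 6) ∨ (a = 6 ∧ b = 0) ∨ (a = 3 ∧ b = 6) ∨ (a = 6 ∧ b = 3)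

instance instDecK33P : DecidableRel K33P := fun _ _ =>
  inferInstanceAs (Decidable (_ ∨ _))

def instSlowK33 : DecidableRel K33plus.Adj := fun a b =>
  decidable_of_iff ((s(a,b) = s(0,4) ∨ s(a,b) = s(0,5) ∨ s(a,b) = s(1,3) ∨ s(a,b) = s(1,4) ∨
    s(a,b) = s(1,5) ∨ s(a,b) = s(2,3) ∨ s(a,b) = s(2,4) ∨ s(a,b) = s(2,5) ∨
    s(a,b) = s(0,6) ∨ s(a,b) = s(3,6)) ∧ a ≠ b) (by
      simp [K33plus, SimpleGraph.fromEdgeSet_adj, Set.mem_insert_iff, Set.mem_singleton_iff])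

attribute [local instance] instSlowK33 in
set_option maxHeartbeats 800000 in
lemma K33plus_adj_iff (a b : Fin 7) : K33plus.Adj a b ↔ K33P a b := by
  revert a b
  decide

instance : DecidableRel K33plus.Adj := fun a b =>
  decidable_of_iff (K33P a b) (K33plus_adj_iff a b).symm

abbrev V45 : Type := (Fin 4 × Fin 7) ⊕ Fin 2

lemma G45_adj_iff (x y : V45) : G45.Adj x y ↔
    ((∃ (c : Fin 4) (a b : Fin 7), K33plus.Adj a b ∧ s(x,y) = s(Sum.inl (c, a), Sum.inl (c, b))) ∨
     s(x,y) = s(Sum.inr 0, Sum.inl (0, (6 : Fin 7))) ∨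
     s(x,y) = s(Sum.inr 0, Sum.inl (1, (6 : Fin 7))) ∨
     s(x,y) = s(Sum.inr 1, Sum.inl (2, (6 : Fin 7))) ∨
     s(x,y) = s(Sum.inr 1, Sum.inl (3, (6 : Fin 7))) ∨
     s(x,y) = s(Sum.inr 0, Sum.inr 1)) ∧ x ≠ y := by
  simp only [G45, SimpleGraph.fromEdgeSet_adj, Set.mem_union, Set.mem_insert_iff,
    Set.mem_singleton_iff, Set.mem_setOf_eq]

/-- Explicit adjacency predicate for `G45`. -/
def G45P : V45 → V45 → Prop
  | .inl (c,a), .inl (c',b) => c = c' ∧ K33P a b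
  | .inr i, .inl (c,a) =>
      (i = 0 ∧ c = 0 ∧ a = 6) ∨ (i = 0 ∧ c = 1 ∧ a = 6) ∨
      (i = 1 ∧ c = 2 ∧ a = 6) ∨ (i = 1 ∧ c = 3 ∧ a = 6)
  | .inl (c,a), .inr i =>
      (i = 0 ∧ c = 0 ∧ a = 6) ∨ (i = 0 ∧ c = 1 ∧ a = 6) ∨
      (i = 1 ∧ c = 2 ∧ a = 6) ∨ (i = 1 ∧ c = 3 ∧ a = 6)
  | .inr i, .inr j => i ≠ j

instance instDecG45P : ∀ x y, Decidable (G45P x y)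
  | .inl (_,_), .inl (_,_) => inferInstanceAs (Decidable (_ ∧ _))
  | .inr _, .inl (_,_) => inferInstanceAs (Decidable (_ ∨ _))
  | .inl (_,_), .inr _ => inferInstanceAs (Decidable (_ ∨ _))
  | .inr _, .inr _ => inferInstanceAs (Decidable (_ ≠ _))

lemma K33P_ne : ∀ a b : Fin 7, K33P a b → a ≠ b := by decide
lemma K33P_symm : ∀ a b : Fin 7, K33P a b → K33P b a := by decide

lemma G45_adj_P (x y : V45) : G45.Adj x y ↔ G45P x y := by
  rw [G45_adj_iff]
  rcases x with ⟨c,a⟩ | i <;> rcases y with ⟨c',b⟩ | j <;>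
    simp only [G45P, Sym2.eq_iff, Sum.inl.injEq, Sum.inr.injEq, Prod.mk.injEq, ne_eq,
      and_false, false_and, and_true, true_and, or_false, false_or, not_false_iff,
      reduceCtorEq, K33plus_adj_iff]
  · constructor
    · rintro ⟨⟨c0, a0, b0, hab, ⟨⟨rfl,rfl⟩,⟨rfl,rfl⟩⟩ | ⟨⟨rfl,rfl⟩,⟨rfl,rfl⟩⟩⟩, -⟩
      · exact ⟨rfl, hab⟩
      · exact ⟨rfl, K33P_symm _ _ hab⟩
    · rintro ⟨rfl, hab⟩
      refine ⟨⟨c, a, b, hab, Or.inl ⟨⟨rfl,rfl⟩,⟨rfl,rfl⟩⟩⟩, ?_⟩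
      simp [K33P_ne _ _ hab]
  · tauto
  · tauto
  · constructor
    · rintro ⟨-, hne⟩; exact hne
    · intro hij; exact ⟨by omega, hij⟩

instance : DecidableRel G45.Adj := fun x y =>
  decidable_of_iff (G45P x y) (G45_adj_P x y).symm

/-! ### Structural lemmas -/

lemma sym2_exists {α : Type*} (e : Sym2 α) : ∃ x' y', e = s(x',y') :=
  Sym2.ind (fun x y => ⟨x, y, rfl⟩) e

lemma L_emb (c : Fin 4) (a b : Fin 7) (h : K33plus.Adj a b) :
    G45.Adj (Sum.inl (c,a)) (Sum.inl (c,b)) := by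
  rw [G45_adj_iff]
  exact ⟨Or.inl ⟨c, a, b, h, rfl⟩, by simp [h.ne]⟩

lemma L_int (x y : V45) (h : G45.Adj x y) (hx : ∀ i : Fin 2, x ≠ Sum.inr i)
    (hy : ∀ i : Fin 2, y ≠ Sum.inr i) :
    ∃ (c : Fin 4) (a b : Fin 7), x = Sum.inl (c,a) ∧ y = Sum.inl (c,b) ∧ K33plus.Adj a b := by
  rw [G45_adj_iff] at h
  obtain ⟨h, -⟩ := h
  rcases h with ⟨c, a, b, hab, he⟩ | he | he | he | he | he <;>
    rcases Sym2.eq_iff.mp he with ⟨hx', hy'⟩ | ⟨hx', hy'⟩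
  · exact ⟨c, a, b, hx', hy', hab⟩
  · exact ⟨c, b, a, hx', hy', hab.symm⟩
  all_goals first
    | exact absurd hx' (hx _)
    | exact absurd hy' (hy _)

lemma Kdecide : ∀ a b a' b' : Fin 7, K33plus.Adj a b → K33plus.Adj a' b' →
    (a = a' ∨ a = b' ∨ b = a' ∨ b = b' ∨ K33plus.Adj a a' ∨ K33plus.Adj a b' ∨
     K33plus.Adj b a' ∨ K33plus.Adj b b') := by decide

lemma h01 : ∀ i j : Fin 2, i ≠ j → G45.Adj (Sum.inr i) (Sum.inr j) := by decide

def cls : V45 → Fin 5 := Sum.elim (fun p => p.1.castSucc) (fun _ => 4)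

def classify : Sym2 V45 → Fin 5 :=
  Sym2.lift ⟨fun x y => max (cls x) (cls y), fun x y => max_comm _ _⟩

lemma cls_le : ∀ v : V45, cls v ≤ 4 := by decide

lemma castSucc_ne : ∀ c : Fin 4, Fin.castSucc c ≠ (4 : Fin 5) := by decide

lemma degG45 : ∀ v : V45, (Finset.univ.filter (G45.Adj v)).card = 3 := by decide

lemma G45_nbhd (v : V45) : (G45.neighborSet v).ncard = 3 := by
  rw [Set.ncard_eq_toFinset_card']
  have : (G45.neighborSet v).toFinset = G45.neighborFinset v := rfl
  rw [this, neighborFinset_eq_filter, degG45 v]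

lemma G45_edges : G45.edgeSet.ncard = 45 := by
  have h2 : ∑ v : V45, G45.degree v = 2 * G45.edgeFinset.card :=
    SimpleGraph.sum_degrees_eq_twice_card_edges G45
  have hdeg : ∀ v : V45, G45.degree v = 3 := by
    intro v
    rw [SimpleGraph.degree, neighborFinset_eq_filter, degG45 v]
  rw [Finset.sum_congr rfl (fun v _ => hdeg v), Finset.sum_const] at h2
  have hcard : (Finset.univ : Finset V45).card • 3 = 90 := by decide
  rw [hcard] at h2
  have : G45.edgeFinset.card = 45 := by omega
  rw [Set.ncard_eq_toFinset_card']
  have h3 : G45.edgeSet.toFinset = G45.edgeFinset := rfl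
  rw [h3, this]

/-- An explicit induced matching of size 5. -/
def Mfin : Finset (Sym2 V45) :=
  {s(Sum.inr 0, Sum.inr 1),
   s(Sum.inl ((0 : Fin 4), (1 : Fin 7)), Sum.inl (0, (4 : Fin 7))),
   s(Sum.inl ((1 : Fin 4), (1 : Fin 7)), Sum.inl (1, (4 : Fin 7))),
   s(Sum.inl ((2 : Fin 4), (1 : Fin 7)), Sum.inl (2, (4 : Fin 7))),
   s(Sum.inl ((3 : Fin 4), (1 : Fin 7)), Sum.inl (3, (4 : Fin 7)))}

set_option maxHeartbeats 800000 in
set_option maxRecDepth 4000 in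
lemma Mfin_sub : ∀ e ∈ Mfin, e ∈ G45.edgeSet := by decide

set_option maxHeartbeats 800000 in
lemma Mfin_pair : ∀ e ∈ Mfin, ∀ f ∈ Mfin, e ≠ f → ∀ u ∈ e, ∀ v ∈ f,
    u ≠ v ∧ ¬ G45.Adj u v := by
  simp only [Mfin, Finset.mem_insert, Finset.mem_singleton]
  rintro e he f hf hne u hu v hv
  rcases he with rfl|rfl|rfl|rfl|rfl <;> rcases hf with rfl|rfl|rfl|rfl|rfl <;>
    rw [Sym2.mem_iff] at hu hv <;> rcases hu with rfl|rfl <;> rcases hv with rfl|rfl <;>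
    first
      | exact absurd rfl hne
      | exact ⟨by decide, by decide⟩

lemma Mfin_matching : IsInducedMatching G45 ↑Mfin := by
  constructor
  · intro e he
    exact Mfin_sub e (Finset.mem_coe.mp he)
  · intro e he f hf
    exact Mfin_pair e (Finset.mem_coe.mp he) f (Finset.mem_coe.mp hf)

lemma ub (M : Set (Sym2 V45)) (hM : IsInducedMatching G45 M) : M.ncard ≤ 5 := by
  obtain ⟨hsub, hind⟩ := hM
  have key : ∀ e ∈ M, (∃ i : Fin 2, Sum.inr i ∈ e ∧ classify e = 4) ∨
      (∃ (c : Fin 4) (a b : Fin 7), e = s(Sum.inl (c,a), Sum.inl (c,b)) ∧ K33plus.Adj a b ∧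
        classify e = c.castSucc) := by
    intro e he
    obtain ⟨x, y, rfl⟩ := sym2_exists e
    have hadj : G45.Adj x y := (SimpleGraph.mem_edgeSet G45).mp (hsub he)
    by_cases hx : ∃ i : Fin 2, x = Sum.inr i
    · obtain ⟨i, rfl⟩ := hx
      refine Or.inl ⟨i, by simp, ?_⟩
      show max (cls (Sum.inr i)) (cls y) = 4
      have : cls (Sum.inr i) = 4 := rfl
      rw [this, max_eq_left (cls_le y)]
    · by_cases hy : ∃ i : Fin 2, y = Sum.inr i
      · obtain ⟨i, rfl⟩ := hy
        refine Or.inl ⟨i, by simp, ?_⟩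
        show max (cls x) (cls (Sum.inr i)) = 4
        have : cls (Sum.inr i) = 4 := rfl
        rw [this, max_eq_right (cls_le x)]
      · push_neg at hx hy
        obtain ⟨c, a, b, rfl, rfl, hab⟩ := L_int x y hadj hx hy
        refine Or.inr ⟨c, a, b, rfl, hab, ?_⟩
        show max (cls (Sum.inl (c,a))) (cls (Sum.inl (c,b))) = c.castSucc
        have h1 : cls (Sum.inl (c,a)) = c.castSucc := rfl
        have h2 : cls (Sum.inl (c,b)) = c.castSucc := rfl
        rw [h1, h2, max_self]
  have hinj : Set.InjOn classify M := by
    intro e he f hf hcl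
    by_contra hne
    rcases key e he with ⟨i, hie, hce⟩ | ⟨c, a, b, rfl, hab, hce⟩ <;>
      rcases key f hf with ⟨j, hjf, hcf⟩ | ⟨c', a', b', rfl, hab', hcf⟩
    · obtain ⟨hneq, hnadj⟩ := hind e he f hf hne _ hie _ hjf
      by_cases hij : i = j
      · subst hij; exact hneq rfl
      · exact hnadj (h01 i j hij)
    · exact castSucc_ne c' (by rw [← hcf, ← hcl, hce])
    · exact castSucc_ne c (by rw [← hce, hcl, hcf])
    · have hcc : c = c' := Fin.castSucc_injective _ (by rw [← hce, hcl, hcf])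
      subst hcc
      have H := hind _ he _ hf hne
      have h1 := H (Sum.inl (c,a)) (Sym2.mem_mk_left _ _) (Sum.inl (c,a')) (Sym2.mem_mk_left _ _)
      have h2 := H (Sum.inl (c,a)) (Sym2.mem_mk_left _ _) (Sum.inl (c,b')) (Sym2.mem_mk_right _ _)
      have h3 := H (Sum.inl (c,b)) (Sym2.mem_mk_right _ _) (Sum.inl (c,a')) (Sym2.mem_mk_left _ _)
      have h4 := H (Sum.inl (c,b)) (Sym2.mem_mk_right _ _) (Sum.inl (c,b')) (Sym2.mem_mk_right _ _)
      rcases Kdecide a b a' b' hab hab' with h | h | h | h | h | h | h | h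
      · exact h1.1 (by rw [h])
      · exact h2.1 (by rw [h])
      · exact h3.1 (by rw [h])
      · exact h4.1 (by rw [h])
      · exact h1.2 (L_emb c _ _ h)
      · exact h2.2 (L_emb c _ _ h)
      · exact h3.2 (L_emb c _ _ h)
      · exact h4.2 (L_emb c _ _ h)
  calc M.ncard = (classify '' M).ncard := (Set.ncard_image_of_injOn hinj).symm
    _ ≤ (Set.univ : Set (Fin 5)).ncard :=
        Set.ncard_le_ncard (Set.subset_univ _) Set.finite_univ
    _ = 5 := by simp [Set.ncard_univ]

/-- G45 is cubic, has 45 edges and strong matching number 5. -/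
theorem stmt_5 :
    (∀ v, (G45.neighborSet v).ncard = 3) ∧ G45.edgeSet.ncard = 45 ∧ nu_s G45 = 5 := by
  refine ⟨G45_nbhd, G45_edges, ?_⟩
  apply IsGreatest.csSup_eq
  constructor
  · exact ⟨↑Mfin, Mfin_matching, by rw [Set.ncard_coe_finset]; decide⟩
  · rintro k ⟨M, hM, rfl⟩
    exact ub M hM
end

section
/- If G is a minimum-order subcubic graph with ν_s(G) < (n(G) − i(G) − n⁺₃₃(G))/6, then G contains no subgraph isomorphic to K⁺₃₃. -/
open SimpleGraph

-- K33plus adjacency characterization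
lemma K33_adj_iff (a b : Fin 7) : K33plus.Adj a b ↔
    ((s(a,b) = s(0,4) ∨ s(a,b) = s(0,5) ∨ s(a,b) = s(1,3) ∨ s(a,b) = s(1,4) ∨ s(a,b) = s(1,5)
      ∨ s(a,b) = s(2,3) ∨ s(a,b) = s(2,4) ∨ s(a,b) = s(2,5) ∨ s(a,b) = s(0,6) ∨ s(a,b) = s(3,6))
     ∧ a ≠ b) := by
  simp [K33plus, SimpleGraph.fromEdgeSet_adj, Set.mem_insert_iff, Set.mem_singleton_iff]

lemma K33_mem_nbr (a b : Fin 7) : a ∈ K33plus.neighborSet b ↔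
    ((s(b,a) = s(0,4) ∨ s(b,a) = s(0,5) ∨ s(b,a) = s(1,3) ∨ s(b,a) = s(1,4) ∨ s(b,a) = s(1,5)
      ∨ s(b,a) = s(2,3) ∨ s(b,a) = s(2,4) ∨ s(b,a) = s(2,5) ∨ s(b,a) = s(0,6) ∨ s(b,a) = s(3,6))
     ∧ b ≠ a) := by
  rw [SimpleGraph.mem_neighborSet, K33_adj_iff]

lemma K33_nbr_card (k : Fin 7) (hk : k ≠ 6) : (K33plus.neighborSet k).ncard = 3 := by
  rw [Set.ncard_eq_three]
  fin_cases k
  · exact ⟨4,5,6, by decide, by decide, by decide, by ext j; rw [K33_mem_nbr]; revert j; decide⟩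
  · exact ⟨3,4,5, by decide, by decide, by decide, by ext j; rw [K33_mem_nbr]; revert j; decide⟩
  · exact ⟨3,4,5, by decide, by decide, by decide, by ext j; rw [K33_mem_nbr]; revert j; decide⟩
  · exact ⟨1,2,6, by decide, by decide, by decide, by ext j; rw [K33_mem_nbr]; revert j; decide⟩
  · exact ⟨0,1,2, by decide, by decide, by decide, by ext j; rw [K33_mem_nbr]; revert j; decide⟩
  · exact ⟨0,1,2, by decide, by decide, by decide, by ext j; rw [K33_mem_nbr]; revert j; decide⟩
  · exact absurd rfl hk

lemma K33_min_deg (a : Fin 7) : 2 ≤ (K33plus.neighborSet a).ncard := by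
  by_cases h : a = 6
  · subst h
    have : K33plus.neighborSet 6 = {0, 3} := by
      ext j; rw [K33_mem_nbr]; revert j; decide
    rw [this, Set.ncard_insert_of_notMem (by decide), Set.ncard_singleton]
  · rw [K33_nbr_card a h]; norm_num

lemma iim_empty {V : Type} (G : SimpleGraph V) : IsInducedMatching G (∅ : Set (Sym2 V)) :=
  ⟨Set.empty_subset _, fun _ h => absurd h (Set.notMem_empty _)⟩

lemma nu_s_bddAbove {V : Type} [Finite V] (G : SimpleGraph V) :
    BddAbove {k | ∃ M : Set (Sym2 V), IsInducedMatching G M ∧ M.ncard = k} := by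
  refine ⟨Nat.card (Sym2 V), fun k hk => ?_⟩
  obtain ⟨M, _, rfl⟩ := hk
  rw [← Set.ncard_univ]
  exact Set.ncard_le_ncard (Set.subset_univ M) Set.finite_univ

lemma nu_s_ge {V : Type} [Finite V] (G : SimpleGraph V) {M : Set (Sym2 V)}
    (h : IsInducedMatching G M) : M.ncard ≤ nu_s G :=
  le_csSup (nu_s_bddAbove G) ⟨M, h, rfl⟩

lemma nu_s_exists {V : Type} [Finite V] (G : SimpleGraph V) :
    ∃ M : Set (Sym2 V), IsInducedMatching G M ∧ M.ncard = nu_s G := by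
  have h := Nat.sSup_mem (s := {k | ∃ M : Set (Sym2 V), IsInducedMatching G M ∧ M.ncard = k})
    ⟨0, ∅, iim_empty G, by simp⟩ (nu_s_bddAbove G)
  exact h

/-- Transfer of induced matchings along graph embeddings. -/
lemma iim_emb {A B : Type} {GA : SimpleGraph A} {GB : SimpleGraph B} (φ : GA ↪g GB)
    {M : Set (Sym2 A)} (h : IsInducedMatching GA M) :
    IsInducedMatching GB (Sym2.map φ '' M) := by
  obtain ⟨hsub, hpair⟩ := h
  constructor
  · rintro e ⟨e₀, he₀, rfl⟩
    exact φ.toHom.map_mem_edgeSet (hsub he₀)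
  · rintro e ⟨e₀, he₀, rfl⟩ f ⟨f₀, hf₀, rfl⟩ hef u hu v hv
    have hne : e₀ ≠ f₀ := fun h => hef (by rw [h])
    obtain ⟨u₀, hu₀, rfl⟩ := Sym2.mem_map.mp hu
    obtain ⟨v₀, hv₀, rfl⟩ := Sym2.mem_map.mp hv
    obtain ⟨h1, h2⟩ := hpair e₀ he₀ f₀ hf₀ hne u₀ hu₀ v₀ hv₀
    exact ⟨fun h => h1 (φ.injective h), fun h => h2 (φ.map_adj_iff.mp h)⟩

lemma iim_iso {A B : Type} {GA : SimpleGraph A} {GB : SimpleGraph B} (φ : GA ≃g GB)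
    {M : Set (Sym2 A)} (h : IsInducedMatching GA M) :
    IsInducedMatching GB (Sym2.map φ '' M) := iim_emb φ.toEmbedding h

lemma nu_s_iso {A B : Type} [Finite A] [Finite B] {GA : SimpleGraph A} {GB : SimpleGraph B}
    (φ : GA ≃g GB) : nu_s GA = nu_s GB := by
  have key : ∀ {A B : Type} [Finite A] [Finite B] {GA : SimpleGraph A} {GB : SimpleGraph B}
      (φ : GA ≃g GB), nu_s GA ≤ nu_s GB := by
    intro A B _ _ GA GB φ
    obtain ⟨M, hM, hc⟩ := nu_s_exists GA
    calc nu_s GA = (Sym2.map φ '' M).ncard := by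
          rw [Set.ncard_image_of_injective _ (Sym2.map.injective φ.injective), hc]
      _ ≤ nu_s GB := nu_s_ge GB (iim_iso φ hM)
  exact le_antisymm (key φ) (key φ.symm)

lemma isolCount_iso {A B : Type} {GA : SimpleGraph A} {GB : SimpleGraph B}
    (φ : GA ≃g GB) : isolCount GA = isolCount GB := by
  unfold isolCount
  rw [← Set.ncard_image_of_injective {v : A | ∀ w, ¬ GA.Adj v w} φ.injective]
  congr 1
  ext b
  simp only [Set.mem_image, Set.mem_setOf_eq]
  constructor
  · rintro ⟨a, ha, rfl⟩ w hw
    refine ha (φ.symm w) ?_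
    rw [← φ.map_adj_iff, φ.apply_symm_apply]
    exact hw
  · intro hb
    refine ⟨φ.symm b, fun w hw => hb (φ w) ?_, φ.apply_symm_apply b⟩
    have := φ.map_adj_iff.mpr hw
    rwa [φ.apply_symm_apply] at this

/-- An isomorphism restricts to an isomorphism of induced subgraphs on component supports. -/
def suppIso {A B : Type} {GA : SimpleGraph A} {GB : SimpleGraph B} (φ : GA ≃g GB)
    (c : GA.ConnectedComponent) :
    GA.induce c.supp ≃g GB.induce (φ.connectedComponentEquiv c).supp where
  toEquiv := ConnectedComponent.isoEquivSupp φ c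
  map_rel_iff' := by
    intro u v
    simp only [ConnectedComponent.isoEquivSupp, Equiv.coe_fn_mk, comap_adj,
      Function.Embedding.coe_subtype]
    exact φ.map_adj_iff

lemma n33plus_iso {A B : Type} {GA : SimpleGraph A} {GB : SimpleGraph B}
    (φ : GA ≃g GB) : n33plus GA = n33plus GB := by
  unfold n33plus
  rw [← Set.ncard_image_of_injective {c : GA.ConnectedComponent |
      Nonempty (GA.induce c.supp ≃g K33plus)} φ.connectedComponentEquiv.injective]
  congr 1
  ext d
  simp only [Set.mem_image, Set.mem_setOf_eq]
  constructor
  · rintro ⟨c, ⟨ψ⟩, rfl⟩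
    exact ⟨(suppIso φ c).symm.trans ψ⟩
  · rintro ⟨ψ⟩
    refine ⟨φ.connectedComponentEquiv.symm d, ⟨?_⟩, Equiv.apply_symm_apply _ _⟩
    have h := suppIso φ (φ.connectedComponentEquiv.symm d)
    rw [Equiv.apply_symm_apply] at h
    exact h.trans ψ

/-- Nested induced subgraphs. -/
noncomputable def induceInduce {V : Type} (G : SimpleGraph V) (A : Set V) (B : Set A) :
    (G.induce A).induce B ≃g G.induce (Subtype.val '' B) where
  toEquiv := Equiv.Set.image Subtype.val B Subtype.val_injective
  map_rel_iff' := by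
    intro u v
    simp [Equiv.Set.image, Equiv.Set.imageOfInjOn]

/-- Neighbor sets within a component's induced subgraph. -/
lemma comp_nbr_ncard {V : Type} {G : SimpleGraph V} (c : G.ConnectedComponent)
    {v : V} (hv : v ∈ c.supp) :
    ((G.induce c.supp).neighborSet ⟨v, hv⟩).ncard = (G.neighborSet v).ncard := by
  rw [← Set.ncard_image_of_injective ((G.induce c.supp).neighborSet ⟨v, hv⟩)
    (Subtype.val_injective)]
  congr 1
  ext w
  simp only [Set.mem_image, mem_neighborSet, comap_adj, Function.Embedding.coe_subtype]
  constructor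
  · rintro ⟨⟨w', hw'⟩, ha, rfl⟩
    exact ha
  · intro ha
    have hw : w ∈ c.supp := by
      rw [ConnectedComponent.mem_supp_iff] at hv ⊢
      rw [← hv]
      exact ConnectedComponent.sound ha.symm.reachable
    exact ⟨⟨w, hw⟩, ha, rfl⟩

/-- Neighbor set cardinality is preserved by isomorphisms. -/
lemma iso_nbr_ncard {A B : Type} {GA : SimpleGraph A} {GB : SimpleGraph B} (φ : GA ≃g GB)
    (v : A) : (GB.neighborSet (φ v)).ncard = (GA.neighborSet v).ncard := by
  rw [← Set.ncard_image_of_injective (GA.neighborSet v) φ.injective]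
  congr 1
  ext w
  simp only [Set.mem_image, mem_neighborSet]
  constructor
  · intro h
    refine ⟨φ.symm w, ?_, φ.apply_symm_apply w⟩
    have := φ.symm.map_adj_iff.mpr h
    rwa [φ.symm_apply_apply] at this
  · rintro ⟨u, h, rfl⟩
    exact φ.map_adj_iff.mpr h

/-- A minimum-order subcubic counterexample to ν_s ≥ (n − i − n⁺₃₃)/6 contains
no subgraph isomorphic to K₃,₃⁺. -/
theorem stmt_6 {V : Type} [Fintype V] (G : SimpleGraph V)
    (hsub : ∀ v, (G.neighborSet v).ncard ≤ 3)
    (hbad : (nu_s G : ℚ) < ((Nat.card V : ℚ) - (isolCount G : ℚ) - (n33plus G : ℚ)) / 6)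
    (hmin : ∀ n < Nat.card V, ∀ H : SimpleGraph (Fin n),
      (∀ v, (H.neighborSet v).ncard ≤ 3) →
      (nu_s H : ℚ) ≥ ((n : ℚ) - (isolCount H : ℚ) - (n33plus H : ℚ)) / 6) :
    ¬ ∃ f : Fin 7 → V, Function.Injective f ∧
        ∀ a b, K33plus.Adj a b → G.Adj (f a) (f b) := by
  rintro ⟨f, hinj, hadj⟩
  classical
  set F : Set V := Set.range f with hF
  set D : Set V := f '' {k : Fin 7 | k ≠ 6} with hDdef
  -- neighborhoods of the non-subdivision branch vertices are saturated
  have hN : ∀ k : Fin 7, k ≠ 6 → G.neighborSet (f k) = f '' K33plus.neighborSet k := by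
    intro k hk
    refine (Set.eq_of_subset_of_ncard_le ?_ ?_ (Set.toFinite _)).symm
    · rintro v ⟨j, hj, rfl⟩
      exact hadj k j hj
    · rw [Set.ncard_image_of_injective _ hinj, K33_nbr_card k hk]
      exact hsub (f k)
  have hDF : D ⊆ F := by rintro v ⟨k, _, rfl⟩; exact ⟨k, rfl⟩
  have hf6D : f 6 ∉ D := by rintro ⟨k, hk, he⟩; exact hk (hinj he)
  have hFD : ∀ v ∈ F, v ∉ D → v = f 6 := by
    rintro v ⟨k, rfl⟩ hv
    by_cases hk : k = 6
    · rw [hk]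
    · exact absurd ⟨k, hk, rfl⟩ hv
  have hnbrD : ∀ v, v ∉ F → ∀ d ∈ D, ¬ G.Adj v d := by
    rintro v hv d ⟨k, hk, rfl⟩ ha
    have hmem : v ∈ G.neighborSet (f k) := ha.symm
    rw [hN k hk] at hmem
    obtain ⟨j, _, rfl⟩ := hmem
    exact hv ⟨j, rfl⟩
  -- no vertex outside D is adjacent to f 1 or f 4
  have hmAux : ∀ i : Fin 7, i ≠ 6 → ((6 : Fin 7) ∉ K33plus.neighborSet i) →
      ∀ v, v ∉ D → ¬ G.Adj v (f i) := by
    intro i hi h6 v hv ha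
    have hmem : v ∈ G.neighborSet (f i) := ha.symm
    rw [hN i hi] at hmem
    obtain ⟨j, hj, rfl⟩ := hmem
    have hj6 : j ≠ 6 := fun h => h6 (h ▸ hj)
    exact hv ⟨j, hj6, rfl⟩
  have hm1 : ∀ v, v ∉ D → ¬ G.Adj v (f 1) :=
    hmAux 1 (by decide) (by rw [K33_mem_nbr]; decide)
  have hm4 : ∀ v, v ∉ D → ¬ G.Adj v (f 4) :=
    hmAux 4 (by decide) (by rw [K33_mem_nbr]; decide)
  have hK14 : G.Adj (f 1) (f 4) := hadj 1 4 (by rw [K33_adj_iff]; decide)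
  have hA60 : G.Adj (f 6) (f 0) := hadj 6 0 (by rw [K33_adj_iff]; decide)
  have hA63 : G.Adj (f 6) (f 3) := hadj 6 3 (by rw [K33_adj_iff]; decide)
  have hf0D : f 0 ∈ D := ⟨0, by decide, rfl⟩
  have hf3D : f 3 ∈ D := ⟨3, by decide, rfl⟩
  have hf1D : f 1 ∈ D := ⟨1, by decide, rfl⟩
  have hf4D : f 4 ∈ D := ⟨4, by decide, rfl⟩
  -- dichotomy for the subdivision vertex
  have hdich : (G.neighborSet (f 6) = {f 0, f 3}) ∨
      (∃ x, x ∉ F ∧ G.neighborSet (f 6) = {f 0, f 3, x}) := by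
    have h03 : ({f 0, f 3} : Set V) ⊆ G.neighborSet (f 6) := by
      rintro v (rfl | rfl)
      exacts [hA60, hA63]
    have hne03 : f 0 ≠ f 3 := fun h => by have := hinj h; simp at this
    by_cases hx : ∃ x, G.Adj (f 6) x ∧ x ∉ F
    · obtain ⟨x, hxa, hxF⟩ := hx
      refine Or.inr ⟨x, hxF, (Set.eq_of_subset_of_ncard_le ?_ ?_ (Set.toFinite _)).symm⟩
      · rintro v (rfl | rfl | rfl)
        exacts [hA60, hA63, hxa]
      · have hx0 : x ≠ f 0 := fun h => hxF (h ▸ ⟨0, rfl⟩)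
        have hx3 : x ≠ f 3 := fun h => hxF (h ▸ ⟨3, rfl⟩)
        have : ({f 0, f 3, x} : Set V).ncard = 3 := by
          rw [Set.ncard_insert_of_notMem (by simp [hne03, Ne.symm hx0]),
            Set.ncard_insert_of_notMem (by simp [Ne.symm hx3]), Set.ncard_singleton]
        rw [this]
        exact hsub (f 6)
    · push_neg at hx
      refine Or.inl (Set.Subset.antisymm ?_ h03)
      intro w hw
      have hwadj : G.Adj (f 6) w := hw
      have hwF : w ∈ F := hx w hwadj
      obtain ⟨k, rfl⟩ := hwF
      have hk6 : k ≠ 6 := fun h => by subst h; exact G.irrefl hwadj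
      have hmem : f 6 ∈ G.neighborSet (f k) := hwadj.symm
      rw [hN k hk6] at hmem
      obtain ⟨j, hj, hje⟩ := hmem
      have hj6 : j = 6 := hinj hje
      subst hj6
      have haux : ∀ k' : Fin 7, (6 : Fin 7) ∈ K33plus.neighborSet k' → k' = 0 ∨ k' = 3 := by
        intro k'; rw [K33_mem_nbr]; revert k'; decide
      have hk03 : k = 0 ∨ k = 3 := haux k hj
      rcases hk03 with rfl | rfl
      · exact Set.mem_insert _ _
      · exact Set.mem_insert_of_mem _ rfl
  -- f 6 has at most one neighbor outside D
  have hf6deg : ∃ z, ∀ w, G.Adj (f 6) w → w ∉ D → w = z := by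
    rcases hdich with h | ⟨x, hxF, h⟩
    · refine ⟨f 6, fun w hw hwD => ?_⟩
      have : w ∈ G.neighborSet (f 6) := hw
      rw [h] at this
      rcases this with rfl | rfl
      exacts [absurd hf0D hwD, absurd hf3D hwD]
    · refine ⟨x, fun w hw hwD => ?_⟩
      have : w ∈ G.neighborSet (f 6) := hw
      rw [h] at this
      rcases this with rfl | rfl | rfl
      exacts [absurd hf0D hwD, absurd hf3D hwD, rfl]
  set H := G.induce (Dᶜ : Set V) with hHdef
  have hSf6 : f 6 ∈ (Dᶜ : Set V) := hf6D
  -- νs(G) ≥ νs(H) + 1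
  obtain ⟨M, hM, hMcard⟩ := nu_s_exists H
  have hM' : IsInducedMatching G (Sym2.map (Subtype.val : (Dᶜ : Set V) → V) '' M) :=
    iim_emb (⟨Function.Embedding.subtype _, Iff.rfl⟩ : H ↪g G) hM
  set M' := Sym2.map (Subtype.val : (Dᶜ : Set V) → V) '' M with hM'def
  have hMmem : ∀ e ∈ M', ∀ u ∈ e, u ∉ D := by
    rintro e ⟨e₀, _, rfl⟩ u hu
    obtain ⟨u₀, _, rfl⟩ := Sym2.mem_map.mp hu
    exact u₀.2
  have hnew : s(f 1, f 4) ∉ M' := fun h =>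
    hMmem _ h (f 1) (Sym2.mem_mk_left _ _) hf1D
  have hins : IsInducedMatching G (insert s(f 1, f 4) M') := by
    constructor
    · exact Set.insert_subset ((G.mem_edgeSet).mpr hK14) hM'.1
    · intro e he e' he' hne u hu v hv
      rcases Set.mem_insert_iff.mp he with rfl | heM
      · rcases Set.mem_insert_iff.mp he' with rfl | he'M
        · exact absurd rfl hne
        · have hvD : v ∉ D := hMmem _ he'M v hv
          rcases Sym2.mem_iff.mp hu with rfl | rfl
          · exact ⟨fun h => hvD (h ▸ hf1D), fun h => hm1 v hvD h.symm⟩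
          · exact ⟨fun h => hvD (h ▸ hf4D), fun h => hm4 v hvD h.symm⟩
      · rcases Set.mem_insert_iff.mp he' with rfl | he'M
        · have huD : u ∉ D := hMmem _ heM u hu
          rcases Sym2.mem_iff.mp hv with rfl | rfl
          · exact ⟨fun h => huD (h ▸ hf1D), fun h => hm1 u huD h⟩
          · exact ⟨fun h => huD (h ▸ hf4D), fun h => hm4 u huD h⟩
        · exact hM'.2 e heM e' he'M hne u hu v hv
  have h1 : nu_s H + 1 ≤ nu_s G := by
    have hcard : (insert s(f 1, f 4) M').ncard = nu_s H + 1 := by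
      rw [Set.ncard_insert_of_notMem hnew (Set.toFinite _), hM'def,
        Set.ncard_image_of_injective _ (Sym2.map.injective Subtype.val_injective), hMcard]
    calc nu_s H + 1 = (insert s(f 1, f 4) M').ncard := hcard.symm
      _ ≤ nu_s G := nu_s_ge G hins
  -- the subdivision vertex lies in no K33plus component of H
  have h7a : ∀ c : H.ConnectedComponent, Nonempty (H.induce c.supp ≃g K33plus) →
      (⟨f 6, hSf6⟩ : (Dᶜ : Set V)) ∉ c.supp := by
    rintro c ⟨ψ⟩ hmem
    have hdeg1 : (H.neighborSet ⟨f 6, hSf6⟩).ncard ≤ 1 := by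
      obtain ⟨z, hz⟩ := hf6deg
      have hss : (H.neighborSet ⟨f 6, hSf6⟩).Subsingleton := by
        intro a ha b hb
        have ha' : (a : V) = z := hz a ha a.2
        have hb' : (b : V) = z := hz b hb b.2
        exact Subtype.ext (ha'.trans hb'.symm)
      rcases hss.eq_empty_or_singleton with h | ⟨y, h⟩
      · rw [h]; simp
      · rw [h]; simp
    have h2le := K33_min_deg (ψ ⟨⟨f 6, hSf6⟩, hmem⟩)
    rw [iso_nbr_ncard ψ ⟨⟨f 6, hSf6⟩, hmem⟩, comp_nbr_ncard c hmem] at h2le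
    omega
  -- walks in G starting outside F whose H-component avoids f 6 stay outside F
  have key : ∀ (v w : V) (_ : G.Walk v w), v ∉ F →
      ¬ (∃ (hv : v ∈ (Dᶜ : Set V)), H.Reachable ⟨v, hv⟩ ⟨f 6, hSf6⟩) →
      w ∉ F ∧ ∃ (hv : v ∈ (Dᶜ : Set V)) (hw : w ∈ (Dᶜ : Set V)),
        H.Reachable ⟨v, hv⟩ ⟨w, hw⟩ := by
    intro v w p
    induction p with
    | @nil a =>
      intro hv hn
      have hvD : a ∈ (Dᶜ : Set V) := fun h => hv (hDF h)
      exact ⟨hv, hvD, hvD, Reachable.refl _⟩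
    | @cons a b w' hab p ih =>
      intro ha hn
      have haD : a ∈ (Dᶜ : Set V) := fun h => ha (hDF h)
      have hbF : b ∉ F := by
        intro hbF
        obtain ⟨k, rfl⟩ := hbF
        by_cases hk : k = 6
        · subst hk
          exact hn ⟨haD, SimpleGraph.Adj.reachable (by exact hab)⟩
        · exact hnbrD a ha (f k) ⟨k, hk, rfl⟩ hab
      have hbD : b ∈ (Dᶜ : Set V) := fun h => hbF (hDF h)
      have hre : H.Reachable ⟨a, haD⟩ ⟨b, hbD⟩ := SimpleGraph.Adj.reachable (by exact hab)
      have hnb : ¬ (∃ (hb' : b ∈ (Dᶜ : Set V)), H.Reachable ⟨b, hb'⟩ ⟨f 6, hSf6⟩) := by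
        rintro ⟨h1, hr⟩
        exact hn ⟨haD, hre.trans hr⟩
      obtain ⟨hwF, _, h2, hr⟩ := ih hbF hnb
      exact ⟨hwF, haD, h2, hre.trans hr⟩
  set SA := {c : H.ConnectedComponent | Nonempty (H.induce c.supp ≃g K33plus)} with hSA
  set SB := {c : G.ConnectedComponent | Nonempty (G.induce c.supp ≃g K33plus)} with hSB
  have hAn : n33plus H = SA.ncard := rfl
  have hBn : n33plus G = SB.ncard := rfl
  have hhom : H →g G := (SimpleGraph.Embedding.toHom ⟨Function.Embedding.subtype _, Iff.rfl⟩ : H →g G)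
  set Φ : H.ConnectedComponent → G.ConnectedComponent :=
    ConnectedComponent.lift (fun (v : (Dᶜ : Set V)) => G.connectedComponentMk ↑v)
      (fun v w p _ => ConnectedComponent.sound
        (p.reachable.map (SimpleGraph.Embedding.toHom ⟨Function.Embedding.subtype _, Iff.rfl⟩ : H →g G))) with hΦ
  have hsuppEq : ∀ c ∈ SA, (Φ c).supp = Subtype.val '' c.supp := by
    intro c
    refine ConnectedComponent.ind (fun v₀ => ?_) c
    intro hc
    have hc6 := h7a _ hc
    have hv0F : (v₀ : V) ∉ F := by
      intro h
      have h6 : (v₀ : V) = f 6 := hFD _ h v₀.2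
      have he : (⟨f 6, hSf6⟩ : (Dᶜ : Set V)) = v₀ := Subtype.ext h6.symm
      rw [he] at hc6
      exact hc6 rfl
    have hnr : ¬ (∃ (hv : (v₀ : V) ∈ (Dᶜ : Set V)),
        H.Reachable ⟨(v₀ : V), hv⟩ ⟨f 6, hSf6⟩) := by
      rintro ⟨h1, hr⟩
      exact hc6 (ConnectedComponent.sound hr.symm)
    ext w
    simp only [Set.mem_image, ConnectedComponent.mem_supp_iff]
    constructor
    · intro hw
      have hreach : G.Reachable (↑v₀) w := ConnectedComponent.eq.mp hw.symm
      obtain ⟨p⟩ := hreach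
      obtain ⟨hwF, h1, h2, hr⟩ := key _ _ p hv0F hnr
      exact ⟨⟨w, h2⟩, ConnectedComponent.sound hr.symm, rfl⟩
    · rintro ⟨w', hw', rfl⟩
      have hrH : H.Reachable w' v₀ := ConnectedComponent.eq.mp hw'
      have hrG : G.Reachable ↑w' ↑v₀ :=
        hrH.map (SimpleGraph.Embedding.toHom ⟨Function.Embedding.subtype _, Iff.rfl⟩ : H →g G)
      exact ConnectedComponent.sound hrG
  have hmaps : ∀ c ∈ SA, Φ c ∈ SB := by
    intro c hc
    obtain ⟨ψ⟩ := hc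
    refine ⟨?_⟩
    rw [hsuppEq c ⟨ψ⟩]
    exact (induceInduce G Dᶜ c.supp).symm.trans ψ
  have hinjΦ : Set.InjOn Φ SA := by
    intro c hc c' hc' heq
    have h1' : Subtype.val '' c.supp = Subtype.val '' c'.supp := by
      rw [← hsuppEq c hc, ← hsuppEq c' hc', heq]
    exact ConnectedComponent.supp_injective
      ((Set.image_injective.mpr Subtype.val_injective) h1')
  have hn33A : n33plus H ≤ n33plus G := by
    rw [hAn, hBn]
    calc SA.ncard = (Φ '' SA).ncard := (Set.ncard_image_of_injOn hinjΦ).symm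
      _ ≤ SB.ncard := Set.ncard_le_ncard (Set.image_subset_iff.mpr hmaps) (Set.toFinite _)
  -- isolated vertices
  have hKex : ∀ k : Fin 7, ∃ j, K33plus.Adj k j := by
    intro k
    simp only [K33_adj_iff]
    revert k
    decide
  have hIGF : ∀ v ∈ F, v ∉ {v : V | ∀ w, ¬ G.Adj v w} := by
    rintro v ⟨k, rfl⟩ hmem
    obtain ⟨j, hj⟩ := hKex k
    exact hmem (f j) (hadj k j hj)
  have hIGsub : {v : V | ∀ w, ¬ G.Adj v w}
      ⊆ Subtype.val '' {u : (Dᶜ : Set V) | ∀ w, ¬ H.Adj u w} := by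
    intro v hvI
    have hvF : v ∉ F := fun h => hIGF v h hvI
    have hvD : v ∈ (Dᶜ : Set V) := fun h => hvF (hDF h)
    exact ⟨⟨v, hvD⟩, fun w hw => hvI ↑w hw, rfl⟩
  have hIsubG : ∀ (u : (Dᶜ : Set V)), ((u : V) ∉ F) → (∀ w, ¬ H.Adj u w) →
      (u : V) ∈ {v : V | ∀ w, ¬ G.Adj v w} := by
    intro u huF hu w hw
    by_cases hwD : w ∈ D
    · exact hnbrD ↑u huF w hwD hw
    · exact hu ⟨w, hwD⟩ hw
  have hIT : isolCount H + n33plus H ≤ isolCount G + n33plus G := by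
    rcases hdich with hN6 | ⟨x, hxF, hN6⟩
    · -- case B : f 6 has no third neighbor
      have hf6I : ∀ w, ¬ H.Adj (⟨f 6, hSf6⟩ : (Dᶜ : Set V)) w := by
        intro w hw
        have hmem : (w : V) ∈ G.neighborSet (f 6) := hw
        rw [hN6] at hmem
        rcases hmem with h | h
        · exact w.2 (h ▸ hf0D)
        · exact w.2 (h ▸ hf3D)
      have hIeqB : Subtype.val '' {u : (Dᶜ : Set V) | ∀ w, ¬ H.Adj u w}
          = insert (f 6) {v : V | ∀ w, ¬ G.Adj v w} := by
        apply Set.Subset.antisymm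
        · rintro v ⟨⟨v', hv'D⟩, hv'I, rfl⟩
          by_cases hv'F : v' ∈ F
          · exact Or.inl (hFD v' hv'F hv'D)
          · exact Or.inr (hIsubG ⟨v', hv'D⟩ hv'F hv'I)
        · rintro v (rfl | hvI)
          · exact ⟨⟨f 6, hSf6⟩, hf6I, rfl⟩
          · exact hIGsub hvI
      have hf6nI : f 6 ∉ {v : V | ∀ w, ¬ G.Adj v w} := fun h => h (f 0) hA60
      have hisolB : isolCount H = isolCount G + 1 := by
        show ({u : (Dᶜ : Set V) | ∀ w, ¬ H.Adj u w}).ncard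
          = ({v : V | ∀ w, ¬ G.Adj v w}).ncard + 1
        rw [← Set.ncard_image_of_injective _ (Subtype.val_injective :
          Function.Injective (Subtype.val : (Dᶜ : Set V) → V)), hIeqB,
          Set.ncard_insert_of_notMem hf6nI (Set.toFinite _)]
      -- the component of f 6 in G is a K33plus component not hit by Φ
      have hFclosed : ∀ v ∈ F, ∀ w, G.Adj v w → w ∈ F := by
        rintro v ⟨k, rfl⟩ w hw
        by_cases hk : k = 6
        · subst hk
          have hmem : w ∈ G.neighborSet (f 6) := hw
          rw [hN6] at hmem
          rcases hmem with h | h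
          · exact h ▸ ⟨0, rfl⟩
          · exact h ▸ ⟨3, rfl⟩
        · have hmem : w ∈ G.neighborSet (f k) := hw
          rw [hN k hk] at hmem
          obtain ⟨j, _, rfl⟩ := hmem
          exact ⟨j, rfl⟩
      have keyF : ∀ (v w : V) (_ : G.Walk v w), v ∈ F → w ∈ F := by
        intro v w p
        induction p with
        | nil => exact id
        | @cons a b w' hab p ih => exact fun ha => ih (hFclosed a ha b hab)
      have hreachF : ∀ k : Fin 7, G.Reachable (f 6) (f k) := by
        have r0 : G.Reachable (f 6) (f 0) := hA60.reachable
        have r3 : G.Reachable (f 6) (f 3) := hA63.reachable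
        intro k
        fin_cases k
        · exact r0
        · exact r3.trans (hadj 3 1 (by rw [K33_adj_iff]; decide)).reachable
        · exact r3.trans (hadj 3 2 (by rw [K33_adj_iff]; decide)).reachable
        · exact r3
        · exact r0.trans (hadj 0 4 (by rw [K33_adj_iff]; decide)).reachable
        · exact r0.trans (hadj 0 5 (by rw [K33_adj_iff]; decide)).reachable
        · exact Reachable.refl _
      have hsupp6 : (G.connectedComponentMk (f 6)).supp = F := by
        ext w
        simp only [ConnectedComponent.mem_supp_iff]
        constructor
        · intro hw
          obtain ⟨p⟩ := (ConnectedComponent.eq.mp hw).symm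
          exact keyF _ _ p ⟨6, rfl⟩
        · rintro ⟨k, rfl⟩
          exact ConnectedComponent.sound (hreachF k).symm
      have hisoF : K33plus ≃g G.induce F := by
        refine ⟨Equiv.ofInjective f hinj, ?_⟩
        intro a b
        show G.Adj (f a) (f b) ↔ K33plus.Adj a b
        constructor
        · intro hab
          by_cases ha6 : a = 6
          · subst ha6
            have hmem : f b ∈ G.neighborSet (f 6) := hab
            rw [hN6] at hmem
            rcases hmem with h | h
            · have hb : b = 0 := hinj h
              subst hb; rw [K33_adj_iff]; decide
            · have hb : b = 3 := hinj h
              subst hb; rw [K33_adj_iff]; decide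
          · have hmem : f b ∈ G.neighborSet (f a) := hab
            rw [hN a ha6] at hmem
            obtain ⟨j, hj, hje⟩ := hmem
            have hjb : j = b := hinj hje
            subst hjb
            exact hj
        · exact hadj a b
      have hB : G.connectedComponentMk (f 6) ∈ SB := by
        refine ⟨?_⟩
        rw [hsupp6]
        exact hisoF.symm
      have hnotmem : G.connectedComponentMk (f 6) ∉ Φ '' SA := by
        rintro ⟨c, hc, heq⟩
        have h6 : f 6 ∈ (Φ c).supp := by
          rw [heq]
          exact rfl
        rw [hsuppEq c hc] at h6
        obtain ⟨w', hw', hwe⟩ := h6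
        have hw6 : w' = ⟨f 6, hSf6⟩ := Subtype.ext hwe
        rw [hw6] at hw'
        exact h7a c hc hw'
      have hn33B : n33plus H + 1 ≤ n33plus G := by
        rw [hAn, hBn]
        have hcard : (insert (G.connectedComponentMk (f 6)) (Φ '' SA)).ncard
            = SA.ncard + 1 := by
          rw [Set.ncard_insert_of_notMem hnotmem (Set.toFinite _),
            Set.ncard_image_of_injOn hinjΦ]
        calc SA.ncard + 1 = (insert (G.connectedComponentMk (f 6)) (Φ '' SA)).ncard :=
              hcard.symm
          _ ≤ SB.ncard := Set.ncard_le_ncard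
              (Set.insert_subset hB (Set.image_subset_iff.mpr hmaps)) (Set.toFinite _)
      omega
    · -- case A : f 6 has a third neighbor x outside F
      have hxD : x ∈ (Dᶜ : Set V) := fun h => hxF (hDF h)
      have hf6x : G.Adj (f 6) x := by
        have hmem : x ∈ G.neighborSet (f 6) := by
          rw [hN6]
          exact Set.mem_insert_of_mem _ (Set.mem_insert_of_mem _ rfl)
        exact hmem
      have hIeq : Subtype.val '' {u : (Dᶜ : Set V) | ∀ w, ¬ H.Adj u w}
          = {v : V | ∀ w, ¬ G.Adj v w} := by
        apply Set.Subset.antisymm _ hIGsub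
        rintro v ⟨⟨v', hv'D⟩, hv'I, rfl⟩
        have hv'F : v' ∉ F := by
          intro h
          have h6 : v' = f 6 := hFD v' h hv'D
          subst h6
          exact hv'I ⟨x, hxD⟩ hf6x
        exact hIsubG ⟨v', hv'D⟩ hv'F hv'I
      have hisolA : isolCount H = isolCount G := by
        show ({u : (Dᶜ : Set V) | ∀ w, ¬ H.Adj u w}).ncard
          = ({v : V | ∀ w, ¬ G.Adj v w}).ncard
        rw [← Set.ncard_image_of_injective _ (Subtype.val_injective :
          Function.Injective (Subtype.val : (Dᶜ : Set V) → V)), hIeq]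
      omega
  -- transport H to a graph on Fin m and apply minimality
  obtain ⟨m, ⟨e₀⟩⟩ := Finite.exists_equiv_fin (Dᶜ : Set V)
  set H'' := SimpleGraph.comap (⇑e₀.symm) H with hH''def
  have φ0 : H'' ≃g H := ⟨e₀.symm, Iff.rfl⟩
  have hsubH : ∀ u : (Dᶜ : Set V), (H.neighborSet u).ncard ≤ 3 := by
    intro u
    rw [← Set.ncard_image_of_injective _ (Subtype.val_injective :
      Function.Injective (Subtype.val : (Dᶜ : Set V) → V))]
    refine le_trans (Set.ncard_le_ncard ?_ (Set.toFinite _)) (hsub ↑u)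
    rintro w ⟨w', hw', rfl⟩
    exact hw'
  have hsub'' : ∀ v : Fin m, (H''.neighborSet v).ncard ≤ 3 := by
    intro v
    rw [← iso_nbr_ncard φ0 v]
    exact hsubH _
  have hmcard : m + 6 = Nat.card V := by
    have h1' : D.ncard + (Dᶜ).ncard = Nat.card V := Set.ncard_add_ncard_compl D
    have h2' : D.ncard = 6 := by
      rw [hDdef, Set.ncard_image_of_injective _ hinj]
      have he : {k : Fin 7 | k ≠ 6} = ({6} : Set (Fin 7))ᶜ := by ext; simp
      rw [he]
      have h3' := Set.ncard_add_ncard_compl ({6} : Set (Fin 7))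
      simp [Set.ncard_singleton, Nat.card_eq_fintype_card] at h3'
      omega
    have h4' : Nat.card (Dᶜ : Set V) = m := Nat.card_eq_of_equiv_fin e₀
    rw [Nat.card_coe_set_eq] at h4'
    omega
  have hq := hmin m (by omega) H'' hsub''
  rw [nu_s_iso φ0, isolCount_iso φ0, n33plus_iso φ0] at hq
  have hc1 : ((nu_s H : ℚ) + 1) ≤ (nu_s G : ℚ) := by exact_mod_cast h1
  have hcm : (m : ℚ) + 6 = (Nat.card V : ℚ) := by exact_mod_cast hmcard
  have hcIT : (isolCount H : ℚ) + (n33plus H : ℚ)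
      ≤ (isolCount G : ℚ) + (n33plus G : ℚ) := by exact_mod_cast hIT
  linarith [hq, hbad]
end

section
/- If G is a minimum-order counterexample to the inequality ν_s(G) ≥ (n(G) − i(G) − n⁺₃₃(G))/6 among subcubic graphs, then no two vertices of degree 2 in G are adjacent. -/
open SimpleGraph

section Basics
variable {V : Type} [Finite V] {G : SimpleGraph V}

lemma sym2_finite : Finite (Sym2 V) :=
  Finite.of_surjective (fun p : V × V => s(p.1, p.2)) (fun e => e.ind (fun a b => ⟨(a,b), rfl⟩))

lemma nus_bddAbove (G : SimpleGraph V) :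
    BddAbove {k | ∃ M : Set (Sym2 V), IsInducedMatching G M ∧ M.ncard = k} := by
  have := sym2_finite (V := V)
  refine ⟨Nat.card (Sym2 V), ?_⟩
  rintro k ⟨M, _, rfl⟩
  rw [← Set.ncard_univ]
  exact Set.ncard_le_ncard (Set.subset_univ M) Set.finite_univ

lemma nus_spec (G : SimpleGraph V) :
    ∃ M : Set (Sym2 V), IsInducedMatching G M ∧ M.ncard = nu_s G := by
  have hemp : IsInducedMatching G (∅ : Set (Sym2 V)) := ⟨by simp, by simp⟩
  have h0 : (0:ℕ) ∈ {k | ∃ M : Set (Sym2 V), IsInducedMatching G M ∧ M.ncard = k} :=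
    ⟨∅, hemp, Set.ncard_empty _⟩
  exact Nat.sSup_mem ⟨0, h0⟩ (nus_bddAbove G)

lemma nus_ge (G : SimpleGraph V) {M : Set (Sym2 V)} (h : IsInducedMatching G M) :
    M.ncard ≤ nu_s G :=
  le_csSup (nus_bddAbove G) ⟨M, h, rfl⟩

/-- Extend an induced matching of the complement of `S` by an edge whose closed
neighborhoods lie inside `S`. -/
lemma key_matching {m : ℕ} {f : Fin m → V} (hf : Function.Injective f) {S : Set V}
    (hrange : Set.range f = Sᶜ) {a b : V} (hab : G.Adj a b)
    (hNa : ∀ w, G.Adj a w → w ∈ S) (hNb : ∀ w, G.Adj b w → w ∈ S)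
    (haS : a ∈ S) (hbS : b ∈ S) :
    nu_s (G.comap f) + 1 ≤ nu_s G := by
  obtain ⟨M', hM', hcard⟩ := nus_spec (G.comap f)
  have hout : ∀ i : Fin m, f i ∉ S := by
    intro i
    have : f i ∈ Set.range f := ⟨i, rfl⟩
    rw [hrange] at this; exact this
  -- membership description of mapped edges
  have hmem : ∀ e ∈ M', ∀ v ∈ Sym2.map f e, ∃ i, v = f i ∧ i ∈ e := by
    intro e he v hv
    obtain ⟨i, hi, rfl⟩ := Sym2.mem_map.mp hv
    exact ⟨i, rfl, hi⟩
  set M : Set (Sym2 V) := insert s(a,b) (Sym2.map f '' M') with hM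
  have habs : s(a,b) ∉ Sym2.map f '' M' := by
    rintro ⟨e, he, heq⟩
    have : a ∈ Sym2.map f e := by rw [heq]; simp
    obtain ⟨i, hi, -⟩ := hmem e he a this
    exact hout i (hi ▸ haS)
  have hIM : IsInducedMatching G M := by
    constructor
    · rintro e (rfl | ⟨e', he', rfl⟩)
      · exact hab
      · induction e' using Sym2.ind with
        | _ i j =>
          simp only [Sym2.map_pair_eq]
          exact hM'.1 he'
    · have pairs : ∀ e ∈ M', ∀ u ∈ Sym2.map f e, ∀ v ∈ (s(a,b) : Sym2 V), u ≠ v ∧ ¬ G.Adj u v := by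
        intro e he u hu v hv
        obtain ⟨i, rfl, -⟩ := hmem e he u hu
        have hvS : v ∈ S := by
          rcases Sym2.mem_iff.mp hv with rfl | rfl
          · exact haS
          · exact hbS
        refine ⟨fun h => hout i (h ▸ hvS), fun h => ?_⟩
        have : f i ∈ S := by
          rcases Sym2.mem_iff.mp hv with rfl | rfl
          · exact hNa _ h.symm
          · exact hNb _ h.symm
        exact hout i this
      rintro e (rfl | ⟨e', he', rfl⟩) g (rfl | ⟨g', hg', rfl⟩) hne u hu v hv
      · exact absurd rfl hne
      · exact ((pairs g' hg' v hv u hu).imp Ne.symm (fun h h' => h h'.symm))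
      · exact pairs e' he' u hu v hv
      · have hne' : e' ≠ g' := fun h => hne (by rw [h])
        obtain ⟨i, rfl, hie⟩ := hmem e' he' u hu
        obtain ⟨j, rfl, hjg⟩ := hmem g' hg' v hv
        obtain ⟨h1, h2⟩ := hM'.2 e' he' g' hg' hne' i hie j hjg
        exact ⟨fun h => h1 (hf h), fun h => h2 h⟩
  have hcardM : M.ncard = M'.ncard + 1 := by
    rw [hM, Set.ncard_insert_of_notMem habs (Set.Finite.image _ (Set.toFinite _)),
      Set.ncard_image_of_injective _ (Sym2.map.injective hf)]
  have := nus_ge G hIM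
  omega

/-- New isolated vertex candidates after deleting `S`. -/
def IsoNew {V : Type} (G : SimpleGraph V) (S : Set V) : Set V :=
  {u | u ∉ S ∧ (G.neighborSet u).Nonempty ∧ G.neighborSet u ⊆ S}

lemma key_isol {m : ℕ} {f : Fin m → V} (hf : Function.Injective f) {S : Set V}
    (hrange : Set.range f = Sᶜ) :
    isolCount (G.comap f) ≤ isolCount G + (IsoNew G S).ncard := by
  classical
  have key : ∀ i : Fin m, (∀ j, ¬ (G.comap f).Adj i j) →
      f i ∈ {v : V | ∀ w, ¬ G.Adj v w} ∪ IsoNew G S := by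
    intro i hi
    have hfiS : f i ∉ S := by
      have : f i ∈ Set.range f := ⟨i, rfl⟩
      rw [hrange] at this; exact this
    have hsub : G.neighborSet (f i) ⊆ S := by
      intro w hw
      by_contra hwS
      have : w ∈ Set.range f := by rw [hrange]; exact hwS
      obtain ⟨j, rfl⟩ := this
      exact hi j hw
    by_cases hne : (G.neighborSet (f i)).Nonempty
    · exact Or.inr ⟨hfiS, hne, hsub⟩
    · left
      intro w hw
      exact hne ⟨w, hw⟩
  calc isolCount (G.comap f)
      ≤ ({v : V | ∀ w, ¬ G.Adj v w} ∪ IsoNew G S).ncard := by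
        apply Set.ncard_le_ncard_of_injOn f (fun i hi => key i hi) (hf.injOn) (Set.toFinite _)
    _ ≤ isolCount G + (IsoNew G S).ncard := Set.ncard_union_le _ _

lemma walk_closed {T : Set V} (hT : ∀ v ∈ T, ∀ w, G.Adj v w → w ∈ T) {u v : V}
    (p : G.Walk u v) (hu : u ∈ T) : v ∈ T := by
  induction p with
  | nil => exact hu
  | cons h p ih => exact ih (hT _ hu _ h)

lemma key_n33 {m : ℕ} {f : Fin m → V} (hf : Function.Injective f)
    (hAtt : ∀ c : (G.comap f).ConnectedComponent,
        Nonempty ((G.comap f).induce c.supp ≃g K33plus) →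
        (∃ i ∈ c.supp, ∃ z, G.Adj (f i) z ∧ z ∉ Set.range f) → False) :
    n33plus (G.comap f) ≤ n33plus G := by
  classical
  set H := G.comap f with hH
  have closed : ∀ c : H.ConnectedComponent, Nonempty (H.induce c.supp ≃g K33plus) →
      ∀ v ∈ f '' c.supp, ∀ w, G.Adj v w → w ∈ f '' c.supp := by
    rintro c hiso v ⟨i, hi, rfl⟩ w hw
    have hwr : w ∈ Set.range f := by
      by_contra hwr
      exact hAtt c hiso ⟨i, hi, w, hw, hwr⟩
    obtain ⟨j, rfl⟩ := hwr
    have hadj : H.Adj i j := hw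
    refine ⟨j, ?_, rfl⟩
    have heq : H.connectedComponentMk j = H.connectedComponentMk i :=
      ConnectedComponent.connectedComponentMk_eq_of_adj hadj.symm
    rw [ConnectedComponent.mem_supp_iff] at hi ⊢
    rw [heq, hi]
  set F : H.ConnectedComponent → G.ConnectedComponent :=
    fun c => G.connectedComponentMk (f c.out) with hF
  have houtc : ∀ c : H.ConnectedComponent, c.out ∈ c.supp := by
    intro c
    rw [ConnectedComponent.mem_supp_iff]
    exact c.out_eq
  have suppF : ∀ c : H.ConnectedComponent, Nonempty (H.induce c.supp ≃g K33plus) →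
      (F c).supp = f '' c.supp := by
    intro c hiso
    apply Set.eq_of_subset_of_subset
    · intro v hv
      rw [ConnectedComponent.mem_supp_iff, hF] at hv
      have hreach : G.Reachable (f c.out) v := (ConnectedComponent.exact hv).symm
      obtain ⟨p⟩ := hreach
      exact walk_closed (closed c hiso) p ⟨c.out, houtc c, rfl⟩
    · rintro v ⟨j, hj, rfl⟩
      have hreach : H.Reachable j c.out := by
        apply ConnectedComponent.exact
        rw [ConnectedComponent.mem_supp_iff] at hj
        rw [hj]
        exact c.out_eq.symm
      have hmapped := hreach.map (⟨f, fun h => h⟩ : H →g G)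
      have hco : ⇑(⟨f, fun h => h⟩ : H →g G) = f := rfl
      rw [hco] at hmapped
      rw [ConnectedComponent.mem_supp_iff, hF]
      exact ConnectedComponent.sound hmapped
  have himage : ∀ c : H.ConnectedComponent, Nonempty (H.induce c.supp ≃g K33plus) →
      Nonempty (G.induce (F c).supp ≃g K33plus) := by
    intro c hiso
    obtain ⟨ψ⟩ := hiso
    rw [suppF c ⟨ψ⟩]
    have χ : H.induce c.supp ≃g G.induce (f '' c.supp) :=
      ⟨Equiv.Set.image f c.supp hf, Iff.rfl⟩
    exact ⟨ψ.comp χ.symm⟩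
  have hinj : Set.InjOn F {c : H.ConnectedComponent | Nonempty (H.induce c.supp ≃g K33plus)} := by
    intro c1 h1 c2 h2 heq
    have himg : f '' c1.supp = f '' c2.supp := by
      rw [← suppF c1 h1, ← suppF c2 h2, heq]
    have hsupp : c1.supp = c2.supp := Set.image_injective.mpr hf himg
    exact ConnectedComponent.supp_injective hsupp
  calc n33plus H ≤ ({d : G.ConnectedComponent | Nonempty (G.induce d.supp ≃g K33plus)}).ncard := by
        apply Set.ncard_le_ncard_of_injOn F (fun c hc => himage c hc) hinj (Set.toFinite _)
    _ = n33plus G := rfl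


lemma key1 {V : Type} [Fintype V] {G : SimpleGraph V}
    (hsub : ∀ v, (G.neighborSet v).ncard ≤ 3)
    (hbad : (nu_s G : ℚ) < ((Nat.card V : ℚ) - (isolCount G : ℚ) - (n33plus G : ℚ)) / 6)
    (hmin : ∀ n < Nat.card V, ∀ H : SimpleGraph (Fin n),
      (∀ v, (H.neighborSet v).ncard ≤ 3) →
      (nu_s H : ℚ) ≥ ((n : ℚ) - (isolCount H : ℚ) - (n33plus H : ℚ)) / 6)
    (S : Set V) {a b : V} (hab : G.Adj a b)
    (haS : a ∈ S) (hbS : b ∈ S)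
    (hNa : ∀ w, G.Adj a w → w ∈ S) (hNb : ∀ w, G.Adj b w → w ∈ S)
    (hAtt : ∀ (m : ℕ) (f : Fin m → V), Function.Injective f → Set.range f = Sᶜ →
      ∀ c : (G.comap f).ConnectedComponent,
        Nonempty ((G.comap f).induce c.supp ≃g K33plus) →
        (∃ i ∈ c.supp, ∃ z, G.Adj (f i) z ∧ z ∉ Set.range f) → False)
    (hcount : S.ncard + (IsoNew G S).ncard ≤ 6) : False := by
  classical
  set m := Fintype.card ↥(Sᶜ : Set V) with hm
  set e : (Sᶜ : Set V) ≃ Fin m := Fintype.equivFin _ with he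
  set f : Fin m → V := fun i => (e.symm i : V) with hf
  have hfinj : Function.Injective f := fun i j h => e.symm.injective (Subtype.ext h)
  have hrange : Set.range f = Sᶜ := by
    have : Set.range f = Set.range (Subtype.val : (Sᶜ : Set V) → V) := by
      ext v
      constructor
      · rintro ⟨i, rfl⟩; exact ⟨e.symm i, rfl⟩
      · rintro ⟨x, rfl⟩; exact ⟨e x, by simp [hf]⟩
    rw [this, Subtype.range_coe]
  have hm' : m < Nat.card V := by
    rw [Nat.card_eq_fintype_card]
    exact Fintype.card_subtype_lt (x := a) (by simp [haS])
  have hsub' : ∀ i, ((G.comap f).neighborSet i).ncard ≤ 3 := by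
    intro i
    refine le_trans (Set.ncard_le_ncard_of_injOn f (fun j hj => hj) hfinj.injOn (Set.toFinite _))
      (hsub (f i))
  have hmm := hmin m hm' (G.comap f) hsub'
  have hext := key_matching hfinj hrange hab hNa hNb haS hbS
  have hiso := key_isol (G := G) hfinj hrange
  have hn33 := key_n33 (G := G) hfinj (hAtt m f hfinj hrange)
  have hcard : S.ncard + m = Nat.card V := by
    have h1 : m = (Sᶜ : Set V).ncard := by
      rw [hm, ← Nat.card_coe_set_eq, Nat.card_eq_fintype_card]
    rw [h1]
    exact Set.ncard_add_ncard_compl S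
  have q2 : (nu_s G : ℚ) ≥ (nu_s (G.comap f) : ℚ) + 1 := by exact_mod_cast hext
  have q3 : (isolCount (G.comap f) : ℚ) ≤ (isolCount G : ℚ) + ((IsoNew G S).ncard : ℚ) := by
    exact_mod_cast hiso
  have q4 : (n33plus (G.comap f) : ℚ) ≤ (n33plus G : ℚ) := by exact_mod_cast hn33
  have q5 : (S.ncard : ℚ) + (m : ℚ) = (Nat.card V : ℚ) := by exact_mod_cast hcard
  have q6 : (S.ncard : ℚ) + ((IsoNew G S).ncard : ℚ) ≤ 6 := by exact_mod_cast hcount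
  linarith [hmm, hbad]

lemma k33_adj (a b : Fin 7) : K33plus.Adj a b ↔
    (s(a,b) ∈ ({s(0,4), s(0,5), s(1,3), s(1,4), s(1,5), s(2,3), s(2,4), s(2,5), s(0,6), s(3,6)} : Finset (Sym2 (Fin 7)))) := by
  rw [K33plus, SimpleGraph.fromEdgeSet_adj]
  simp [Sym2.eq_iff]
  aesop

instance inst_s9 : DecidableRel K33plus.Adj := fun a b => decidable_of_iff _ (k33_adj a b).symm

lemma ncard_tri {α : Type*} {a b c : α} (h1 : a ≠ b) (h2 : a ≠ c) (h3 : b ≠ c) :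
    ({a,b,c} : Set α).ncard = 3 := by
  rw [Set.ncard_insert_of_notMem (by simp [h1, h2]) (Set.toFinite _), Set.ncard_pair h3]

lemma ncard_quad {α : Type*} {a b c d : α} (h1 : a ≠ b) (h2 : a ≠ c) (h3 : a ≠ d)
    (h4 : b ≠ c) (h5 : b ≠ d) (h6 : c ≠ d) : ({a,b,c,d} : Set α).ncard = 4 := by
  rw [Set.ncard_insert_of_notMem (by simp [h1, h2, h3]) (Set.toFinite _), ncard_tri h4 h5 h6]

lemma induce_adj_val {W : Type} {H : SimpleGraph W} {T : Set W} {u w : ↥T} :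
    (H.induce T).Adj u w ↔ H.Adj u w := Iff.rfl

/-- Two distinct neighbours inside the component, for a vertex of a K33plus component. -/
lemma ind2 {W : Type} {H : SimpleGraph W} {T : Set W} (ψ : H.induce T ≃g K33plus)
    {v : W} (hv : v ∈ T) :
    ∃ j1 j2 : ↥T, (j1 : W) ≠ (j2 : W) ∧ H.Adj v j1 ∧ H.Adj v j2 := by
  have key : ∀ t : Fin 7, ∃ p q, p ≠ q ∧ K33plus.Adj t p ∧ K33plus.Adj t q := by decide
  obtain ⟨p, q, hpq, hp, hq⟩ := key (ψ ⟨v, hv⟩)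
  refine ⟨ψ.symm p, ψ.symm q, ?_, ?_, ?_⟩
  · intro h
    exact hpq (ψ.symm.injective (Subtype.ext h))
  · have h := ψ.symm.map_adj_iff.mpr hp
    have h0 : ψ.symm (ψ ⟨v, hv⟩) = ⟨v, hv⟩ := ψ.toEquiv.symm_apply_apply _
    rw [h0] at h
    exact h
  · have h := ψ.symm.map_adj_iff.mpr hq
    have h0 : ψ.symm (ψ ⟨v, hv⟩) = ⟨v, hv⟩ := ψ.toEquiv.symm_apply_apply _
    rw [h0] at h
    exact h

lemma lemK {V : Type} [Fintype V] {G : SimpleGraph V}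
    (hsub : ∀ v, (G.neighborSet v).ncard ≤ 3)
    (hbad : (nu_s G : ℚ) < ((Nat.card V : ℚ) - (isolCount G : ℚ) - (n33plus G : ℚ)) / 6)
    (hmin : ∀ n < Nat.card V, ∀ H : SimpleGraph (Fin n),
      (∀ v, (H.neighborSet v).ncard ≤ 3) →
      (nu_s H : ℚ) ≥ ((n : ℚ) - (isolCount H : ℚ) - (n33plus H : ℚ)) / 6)
    (a : Fin 7 → V) (hinj : Function.Injective a)
    (hiff : ∀ s t, G.Adj (a s) (a t) ↔ K33plus.Adj s t)
    (hclosed : ∀ t, t ≠ 6 → ∀ w, G.Adj (a t) w → ∃ j, w = a j)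
    (hout : ∃ z, G.Adj (a 6) z ∧ z ∉ Set.range a) : False := by
  classical
  set S : Set V := a '' {t | t ≠ 6} with hS
  have hmemS : ∀ j, a j ∈ S ↔ j ≠ 6 := by
    intro j
    constructor
    · rintro ⟨t, ht, h⟩
      rw [← hinj h]; exact ht
    · intro h; exact ⟨j, h, rfl⟩
  obtain ⟨z, hz, hzr⟩ := hout
  have hcl' : ∀ k, k ≠ 6 → ∀ w, G.Adj (a k) w → w ∈ S ∨ w = a 6 := by
    intro k hk w hw
    obtain ⟨j, rfl⟩ := hclosed k hk w hw
    by_cases hj : j = 6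
    · exact Or.inr (by rw [hj])
    · exact Or.inl ((hmemS j).mpr hj)
  have hNclosed : ∀ t : Fin 7, t ≠ 6 → (∀ j, K33plus.Adj t j → j ≠ 6) → ∀ w, G.Adj (a t) w → w ∈ S := by
    intro t ht htj w hw
    obtain ⟨j, rfl⟩ := hclosed t ht w hw
    exact (hmemS j).mpr (htj j ((hiff t j).mp hw))
  apply key1 hsub hbad hmin S ((hiff 1 4).mpr (by decide))
    ((hmemS 1).mpr (by decide)) ((hmemS 4).mpr (by decide))
    (hNclosed 1 (by decide) (by decide)) (hNclosed 4 (by decide) (by decide))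
  · -- hAtt
    rintro m f hfinj hrange c ⟨ψ⟩ ⟨i, hic, z', hz', hz'r⟩
    have hz'S : z' ∈ S := by
      have : z' ∉ Sᶜ := by rw [← hrange]; exact hz'r
      simpa using this
    obtain ⟨k, hk, rfl⟩ := hz'S
    have hfiS : f i ∉ S := by
      have : f i ∈ Sᶜ := by rw [← hrange]; exact ⟨i, rfl⟩
      exact this
    obtain ⟨j, hj⟩ := hclosed k hk (f i) hz'.symm
    have hj6 : j = 6 := by
      by_contra hjne
      exact hfiS (hj ▸ (hmemS j).mpr hjne)
    rw [hj6] at hj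
    -- a 6 = f i has two neighbours inside the component, plus a 0 and a 3
    obtain ⟨j1, j2, hj12, hadj1, hadj2⟩ := ind2 ψ hic
    have hadj1' : G.Adj (a 6) (f (j1 : Fin m)) := by rw [← hj]; exact hadj1
    have hadj2' : G.Adj (a 6) (f (j2 : Fin m)) := by rw [← hj]; exact hadj2
    have hsubnb : ({a 0, a 3, f (j1 : Fin m), f (j2 : Fin m)} : Set V) ⊆ G.neighborSet (a 6) := by
      rintro w (rfl | rfl | rfl | rfl)
      · exact ((hiff 6 0).mpr (by decide))
      · exact ((hiff 6 3).mpr (by decide))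
      · exact hadj1'
      · exact hadj2'
    have hfS : ∀ j : Fin m, f j ∉ S := by
      intro j
      have : f j ∈ Sᶜ := by rw [← hrange]; exact ⟨j, rfl⟩
      exact this
    have hne : ∀ t : Fin 7, t ≠ 6 → ∀ j : Fin m, a t ≠ f j := by
      intro t ht j h
      exact hfS j (h ▸ (hmemS t).mpr ht)
    have h4 : ({a 0, a 3, f (j1 : Fin m), f (j2 : Fin m)} : Set V).ncard = 4 :=
      ncard_quad (fun h => by simpa using hinj h) (hne 0 (by decide) _) (hne 0 (by decide) _)
        (hne 3 (by decide) _) (hne 3 (by decide) _) (fun h => hj12 (hfinj h))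
    have := Set.ncard_le_ncard hsubnb (Set.toFinite _)
    rw [h4] at this
    have := hsub (a 6)
    omega
  · -- count
    have hS6 : S.ncard = 6 := by
      rw [hS, Set.ncard_image_of_injective _ hinj]
      have : ({t : Fin 7 | t ≠ 6}) = ({6} : Set (Fin 7))ᶜ := by
        ext t; simp
      rw [this]
      have h1 := Set.ncard_add_ncard_compl ({6} : Set (Fin 7))
      rw [Set.ncard_singleton] at h1
      simp only [Nat.card_eq_fintype_card, Fintype.card_fin] at h1
      omega
    have hIso : IsoNew G S = ∅ := by
      ext u
      simp only [Set.mem_empty_iff_false, iff_false]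
      rintro ⟨huS, ⟨w, hw⟩, hsubS⟩
      have hwS : w ∈ S := hsubS hw
      obtain ⟨k, hk, rfl⟩ := hwS
      obtain ⟨j, rfl⟩ := hclosed k hk u (G.adj_symm hw)
      have hj6 : j = 6 := by
        by_contra hj
        exact huS ((hmemS j).mpr hj)
      subst hj6
      obtain ⟨k2, -, hk2⟩ := hsubS hz
      exact hzr ⟨k2, hk2⟩
    rw [hS6, hIso, Set.ncard_empty]

lemma ind3 {W : Type} {H : SimpleGraph W} {T : Set W} (ψ : H.induce T ≃g K33plus)
    {v : W} (hv : v ∈ T) (h6 : ψ ⟨v, hv⟩ ≠ 6) :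
    ∃ j1 j2 j3 : ↥T, (j1 : W) ≠ (j2 : W) ∧ (j1 : W) ≠ (j3 : W) ∧ (j2 : W) ≠ (j3 : W) ∧
      H.Adj v j1 ∧ H.Adj v j2 ∧ H.Adj v j3 := by
  have key : ∀ t : Fin 7, t ≠ 6 → ∃ p q r, p ≠ q ∧ p ≠ r ∧ q ≠ r ∧
      K33plus.Adj t p ∧ K33plus.Adj t q ∧ K33plus.Adj t r := by decide
  obtain ⟨p, q, r, hpq, hpr, hqr, hp, hq, hr⟩ := key (ψ ⟨v, hv⟩) h6
  have h0 : ψ.symm (ψ ⟨v, hv⟩) = ⟨v, hv⟩ := ψ.toEquiv.symm_apply_apply _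
  refine ⟨ψ.symm p, ψ.symm q, ψ.symm r,
    fun h => hpq (ψ.symm.injective (Subtype.ext h)),
    fun h => hpr (ψ.symm.injective (Subtype.ext h)),
    fun h => hqr (ψ.symm.injective (Subtype.ext h)), ?_, ?_, ?_⟩
  · have h := ψ.symm.map_adj_iff.mpr hp; rw [h0] at h; exact h
  · have h := ψ.symm.map_adj_iff.mpr hq; rw [h0] at h; exact h
  · have h := ψ.symm.map_adj_iff.mpr hr; rw [h0] at h; exact h

lemma noAttached {V : Type} [Fintype V] {G : SimpleGraph V}
    (hsub : ∀ v, (G.neighborSet v).ncard ≤ 3)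
    (hbad : (nu_s G : ℚ) < ((Nat.card V : ℚ) - (isolCount G : ℚ) - (n33plus G : ℚ)) / 6)
    (hmin : ∀ n < Nat.card V, ∀ H : SimpleGraph (Fin n),
      (∀ v, (H.neighborSet v).ncard ≤ 3) →
      (nu_s H : ℚ) ≥ ((n : ℚ) - (isolCount H : ℚ) - (n33plus H : ℚ)) / 6)
    (S : Set V) (m : ℕ) (f : Fin m → V) (hfinj : Function.Injective f)
    (hrange : Set.range f = Sᶜ) (c : (G.comap f).ConnectedComponent)
    (hiso : Nonempty ((G.comap f).induce c.supp ≃g K33plus))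
    (hatt : ∃ i ∈ c.supp, ∃ z, G.Adj (f i) z ∧ z ∉ Set.range f) : False := by
  classical
  obtain ⟨ψ⟩ := hiso
  obtain ⟨i0, hi0, z, hz, hzr⟩ := hatt
  set b : Fin 7 → V := fun t => f ((ψ.symm t) : Fin m) with hb
  have hbinj : Function.Injective b :=
    fun s t h => (ψ.symm.injective (Subtype.ext (hfinj h)))
  have hbiff : ∀ s t, G.Adj (b s) (b t) ↔ K33plus.Adj s t := by
    intro s t
    have : G.Adj (b s) (b t) ↔ ((G.comap f).induce c.supp).Adj (ψ.symm s) (ψ.symm t) := Iff.rfl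
    rw [this, ψ.symm.map_adj_iff]
  -- closed neighbourhoods for non-subdivision vertices
  have hclosed : ∀ t, t ≠ 6 → ∀ w, G.Adj (b t) w → ∃ j, w = b j := by
    intro t ht w hw
    have hmem : ((ψ.symm t) : Fin m) ∈ c.supp := (ψ.symm t).2
    have h6 : ψ ⟨((ψ.symm t) : Fin m), hmem⟩ ≠ 6 := by
      have : (⟨((ψ.symm t) : Fin m), hmem⟩ : ↥c.supp) = ψ.symm t := rfl
      rw [this]
      exact fun h => ht ((ψ.toEquiv.apply_symm_apply t).symm.trans h)
    obtain ⟨j1, j2, j3, h12, h13, h23, ha1, ha2, ha3⟩ := ind3 ψ hmem h6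
    have hsubnb : ({f (j1 : Fin m), f (j2 : Fin m), f (j3 : Fin m)} : Set V) ⊆
        G.neighborSet (b t) := by
      rintro u (rfl | rfl | rfl)
      · exact ha1
      · exact ha2
      · exact ha3
    have h3 : ({f (j1 : Fin m), f (j2 : Fin m), f (j3 : Fin m)} : Set V).ncard = 3 :=
      ncard_tri (fun h => h12 (hfinj h)) (fun h => h13 (hfinj h)) (fun h => h23 (hfinj h))
    have heq : ({f (j1 : Fin m), f (j2 : Fin m), f (j3 : Fin m)} : Set V) =
        G.neighborSet (b t) := by
      apply Set.eq_of_subset_of_ncard_le hsubnb _ (Set.toFinite _)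
      rw [h3]
      exact hsub (b t)
    have hwmem : w ∈ G.neighborSet (b t) := hw
    rw [← heq] at hwmem
    -- w is one of the f-values; express as b of the ψ-image
    rcases hwmem with rfl | rfl | rfl
    · exact ⟨ψ j1, by rw [hb]; simp; exact congrArg (fun x : ↥c.supp => f (x : Fin m)) (ψ.toEquiv.symm_apply_apply j1).symm⟩
    · exact ⟨ψ j2, by rw [hb]; simp; exact congrArg (fun x : ↥c.supp => f (x : Fin m)) (ψ.toEquiv.symm_apply_apply j2).symm⟩
    · exact ⟨ψ j3, by rw [hb]; simp; exact congrArg (fun x : ↥c.supp => f (x : Fin m)) (ψ.toEquiv.symm_apply_apply j3).symm⟩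
  -- the attachment vertex must be the subdivision vertex
  have ht0 : ψ ⟨i0, hi0⟩ = 6 := by
    by_contra h6
    have hb0 : b (ψ ⟨i0, hi0⟩) = f i0 := by
      rw [hb]; simp; exact congrArg (fun x : ↥c.supp => f (x : Fin m)) (ψ.toEquiv.symm_apply_apply _)
    obtain ⟨j, hj⟩ := hclosed (ψ ⟨i0, hi0⟩) h6 z (by rw [hb0]; exact hz)
    exact hzr (hj ▸ ⟨((ψ.symm j) : Fin m), rfl⟩)
  have hb6 : b 6 = f i0 := by rw [← ht0, hb]; simp; exact congrArg (fun x : ↥c.supp => f (x : Fin m)) (ψ.toEquiv.symm_apply_apply _)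
  apply lemK hsub hbad hmin b hbinj hbiff hclosed
  refine ⟨z, by rw [hb6]; exact hz, fun ⟨j, hj⟩ => hzr ⟨((ψ.symm j) : Fin m), hj⟩⟩

lemma key2 {V : Type} [Fintype V] {G : SimpleGraph V}
    (hsub : ∀ v, (G.neighborSet v).ncard ≤ 3)
    (hbad : (nu_s G : ℚ) < ((Nat.card V : ℚ) - (isolCount G : ℚ) - (n33plus G : ℚ)) / 6)
    (hmin : ∀ n < Nat.card V, ∀ H : SimpleGraph (Fin n),
      (∀ v, (H.neighborSet v).ncard ≤ 3) →
      (nu_s H : ℚ) ≥ ((n : ℚ) - (isolCount H : ℚ) - (n33plus H : ℚ)) / 6)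
    (S : Set V) {a b : V} (hab : G.Adj a b)
    (haS : a ∈ S) (hbS : b ∈ S)
    (hNa : ∀ w, G.Adj a w → w ∈ S) (hNb : ∀ w, G.Adj b w → w ∈ S)
    (hcount : S.ncard + (IsoNew G S).ncard ≤ 6) : False :=
  key1 hsub hbad hmin S hab haS hbS hNa hNb
    (fun m f hfinj hrange c hiso hatt =>
      noAttached hsub hbad hmin S m f hfinj hrange c hiso hatt) hcount

lemma ncard_le_one_of_sub {α : Type*} {s : Set α} (h : ∀ a ∈ s, ∀ b ∈ s, a = b) :
    s.ncard ≤ 1 := by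
  rcases Set.eq_empty_or_nonempty s with rfl | ⟨a, ha⟩
  · simp
  · have : s = {a} := Set.eq_singleton_iff_unique_mem.mpr ⟨ha, fun b hb => h b hb a ha⟩
    rw [this]; simp

section Cases
variable {V : Type} [Fintype V] {G : SimpleGraph V}

/-- Case 3, pendant subcase: `p` is adjacent to `x'` only. -/
lemma case3pendant
    (hsub : ∀ v, (G.neighborSet v).ncard ≤ 3)
    (hbad : (nu_s G : ℚ) < ((Nat.card V : ℚ) - (isolCount G : ℚ) - (n33plus G : ℚ)) / 6)
    (hmin : ∀ n < Nat.card V, ∀ H : SimpleGraph (Fin n),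
      (∀ v, (H.neighborSet v).ncard ≤ 3) →
      (nu_s H : ℚ) ≥ ((n : ℚ) - (isolCount H : ℚ) - (n33plus H : ℚ)) / 6)
    {x y x' y' p q : V}
    (hadj : G.Adj x y) (hNx : G.neighborSet x = {y, x'}) (hNy : G.neighborSet y = {x, y'})
    (hyx' : y ≠ x') (hxy' : x ≠ y')
    (hp : G.Adj x' p) (hq : G.Adj x' q) (hpq : p ≠ q)
    (hpn : ∀ w, G.Adj p w → w = x' ∨ w = y') (hqn : ∀ w, G.Adj q w → w = x' ∨ w = y')
    (hx'y' : x' ≠ y') (hpy' : ¬ G.Adj y' p)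
    (hpx : p ≠ x) (hpy : p ≠ y) (hqx : q ≠ x) (hqy : q ≠ y) : False := by
  classical
  have hxx' : G.Adj x x' := by
    have : x' ∈ G.neighborSet x := by rw [hNx]; simp
    exact this
  have hyy' : G.Adj y y' := by
    have : y' ∈ G.neighborSet y := by rw [hNy]; simp
    exact this
  have hxne : x ≠ x' := G.ne_of_adj hxx'
  have hyne : y ≠ y' := G.ne_of_adj hyy'
  have hxy : x ≠ y := G.ne_of_adj hadj
  have hpx' : p ≠ x' := fun h => G.irrefl (h ▸ hp)
  have hqx' : q ≠ x' := fun h => G.irrefl (h ▸ hq)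
  have hy'p : y' ≠ p := by
    intro h
    rcases hpn y (by rw [← h]; exact hyy'.symm) with h' | h'
    · exact hyx' h'
    · exact hyne h'
  have hy'q : y' ≠ q := by
    intro h
    rcases hqn y (by rw [← h]; exact hyy'.symm) with h' | h'
    · exact hyx' h'
    · exact hyne h'
  -- N(x') = {x, p, q}
  have hNx' : ({x, p, q} : Set V) = G.neighborSet x' := by
    apply Set.eq_of_subset_of_ncard_le
    · rintro w (rfl | rfl | rfl)
      · exact hxx'.symm
      · exact hp
      · exact hq
    · rw [ncard_tri (fun h => hpx h.symm) (fun h => hqx h.symm) hpq]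
      exact hsub x'
    · exact Set.toFinite _
  have hNp : G.neighborSet p = {x'} := by
    apply Set.eq_of_subset_of_subset
    · intro w hw
      rcases hpn w hw with rfl | rfl
      · rfl
      · exact absurd hw.symm hpy'
    · rintro w rfl
      exact hp.symm
  set S : Set V := {x', x, p, q} with hS
  have hyS : y ∉ S := by
    intro h
    rcases h with h | h | h | h
    · exact hyx' h
    · exact hxy h.symm
    · exact hpy h.symm
    · exact hqy h.symm
  have hy'S : y' ∉ S := by
    intro h
    rcases h with h | h | h | h
    · exact hx'y' h.symm
    · exact hxy' h.symm
    · exact hy'p h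
    · exact hy'q h
  have hIso : IsoNew G S = ∅ := by
    ext u
    simp only [Set.mem_empty_iff_false, iff_false]
    rintro ⟨huS, ⟨w, hw⟩, hsubS⟩
    have hwadj : G.Adj u w := hw
    have hwS : w ∈ S := hsubS hw
    rcases hwS with h | h | h | h
    · -- w = x' : u ∈ N(x') ⊆ S
      rw [h] at hwadj
      have hu : u ∈ G.neighborSet x' := hwadj.symm
      rw [← hNx'] at hu
      rcases hu with h' | h' | h' <;> subst h' <;> exact huS (by simp [hS])
    · -- w = x : u ∈ N(x) = {y, x'}
      rw [h] at hwadj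
      have hu : u ∈ G.neighborSet x := hwadj.symm
      rw [hNx] at hu
      rcases hu with h' | h'
      · -- u = y : but y' ∈ N(y) and y' ∉ S
        subst h'
        have : y' ∈ S := hsubS (by rw [hNy]; simp)
        exact hy'S this
      · subst h'; exact huS (by simp [hS])
    · -- w = p : u ∈ N(p) = {x'}
      rw [h] at hwadj
      have hu : u ∈ G.neighborSet p := hwadj.symm
      rw [hNp] at hu
      have h' : u = x' := hu
      subst h'; exact huS (by simp [hS])
    · -- w = q : u = x' or y'
      rw [h] at hwadj
      rcases hqn u hwadj.symm with h' | h'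
      · subst h'; exact huS (by simp [hS])
      · -- u = y' : y ∈ N(y') but y ∉ S
        subst h'
        have : y ∈ S := hsubS hyy'.symm
        exact hyS this
  have hcount : S.ncard + (IsoNew G S).ncard ≤ 6 := by
    rw [hIso, Set.ncard_empty]
    have h1 : S.ncard ≤ 4 := by
      rw [hS]
      refine le_trans (Set.ncard_insert_le _ _) ?_
      have := Set.ncard_insert_le x ({p, q} : Set V)
      have h2 := Set.ncard_insert_le p ({q} : Set V)
      simp only [Set.ncard_singleton] at h2
      omega
    omega
  exact key2 hsub hbad hmin S hp (by simp [hS]) (by simp [hS])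
    (fun w hw => by
      have : w ∈ G.neighborSet x' := hw
      rw [← hNx'] at this
      rcases this with rfl | rfl | rfl
      · simp [hS]
      · simp [hS]
      · simp [hS])
    (fun w hw => by
      have : w ∈ G.neighborSet p := hw
      rw [hNp] at this
      rcases this with rfl
      simp [hS])
    hcount

/-- Case 3 core: two distinct new-isolated candidates adjacent to `x'`. -/
lemma case3core
    (hsub : ∀ v, (G.neighborSet v).ncard ≤ 3)
    (hbad : (nu_s G : ℚ) < ((Nat.card V : ℚ) - (isolCount G : ℚ) - (n33plus G : ℚ)) / 6)
    (hmin : ∀ n < Nat.card V, ∀ H : SimpleGraph (Fin n),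
      (∀ v, (H.neighborSet v).ncard ≤ 3) →
      (nu_s H : ℚ) ≥ ((n : ℚ) - (isolCount H : ℚ) - (n33plus H : ℚ)) / 6)
    {x y x' y' u1 u2 : V}
    (hadj : G.Adj x y) (hNx : G.neighborSet x = {y, x'}) (hNy : G.neighborSet y = {x, y'})
    (hyx' : y ≠ x') (hxy' : x ≠ y') (hx'y' : x' ≠ y')
    (hu1 : G.Adj x' u1) (hu2 : G.Adj x' u2) (h12 : u1 ≠ u2)
    (hu1n : ∀ w, G.Adj u1 w → w = x' ∨ w = y') (hu2n : ∀ w, G.Adj u2 w → w = x' ∨ w = y')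
    (h1x : u1 ≠ x) (h1y : u1 ≠ y) (h2x : u2 ≠ x) (h2y : u2 ≠ y) : False := by
  classical
  have hxx' : G.Adj x x' := by
    have : x' ∈ G.neighborSet x := by rw [hNx]; simp
    exact this
  have hyy' : G.Adj y y' := by
    have : y' ∈ G.neighborSet y := by rw [hNy]; simp
    exact this
  have hxne : x ≠ x' := G.ne_of_adj hxx'
  have hyne : y ≠ y' := G.ne_of_adj hyy'
  have hxy : x ≠ y := G.ne_of_adj hadj
  have h1x' : u1 ≠ x' := fun h => G.irrefl (h ▸ hu1)
  have h2x' : u2 ≠ x' := fun h => G.irrefl (h ▸ hu2)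
  have hy'1 : y' ≠ u1 := by
    intro h
    rcases hu1n y (by rw [← h]; exact hyy'.symm) with h' | h'
    · exact hyx' h'
    · exact hyne h'
  have hy'2 : y' ≠ u2 := by
    intro h
    rcases hu2n y (by rw [← h]; exact hyy'.symm) with h' | h'
    · exact hyx' h'
    · exact hyne h'
  by_cases ha1 : G.Adj y' u1
  · by_cases ha2 : G.Adj y' u2
    · -- both adjacent to y' : the whole graph closes up on 6 vertices
      have hNx' : ({x, u1, u2} : Set V) = G.neighborSet x' := by
        apply Set.eq_of_subset_of_ncard_le
        · rintro w (rfl | rfl | rfl)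
          · exact hxx'.symm
          · exact hu1
          · exact hu2
        · rw [ncard_tri (fun h => h1x h.symm) (fun h => h2x h.symm) h12]
          exact hsub x'
        · exact Set.toFinite _
      have hNy' : ({y, u1, u2} : Set V) = G.neighborSet y' := by
        apply Set.eq_of_subset_of_ncard_le
        · rintro w (rfl | rfl | rfl)
          · exact hyy'.symm
          · exact ha1
          · exact ha2
        · rw [ncard_tri (fun h => h1y h.symm) (fun h => h2y h.symm) h12]
          exact hsub y'
        · exact Set.toFinite _
      set S : Set V := {x, y, x', y', u1, u2} with hS
      have hIso : IsoNew G S = ∅ := by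
        ext u
        simp only [Set.mem_empty_iff_false, iff_false]
        rintro ⟨huS, ⟨w, hw⟩, hsubS⟩
        have hwadj : G.Adj u w := hw
        have hwS : w ∈ S := hsubS hw
        rcases hwS with h | h | h | h | h | h
        · rw [h] at hwadj
          have hu : u ∈ G.neighborSet x := hwadj.symm
          rw [hNx] at hu
          rcases hu with h' | h' <;> subst h' <;> exact huS (by simp [hS])
        · rw [h] at hwadj
          have hu : u ∈ G.neighborSet y := hwadj.symm
          rw [hNy] at hu
          rcases hu with h' | h' <;> subst h' <;> exact huS (by simp [hS])
        · rw [h] at hwadj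
          have hu : u ∈ G.neighborSet x' := hwadj.symm
          rw [← hNx'] at hu
          rcases hu with h' | h' | h' <;> subst h' <;> exact huS (by simp [hS])
        · rw [h] at hwadj
          have hu : u ∈ G.neighborSet y' := hwadj.symm
          rw [← hNy'] at hu
          rcases hu with h' | h' | h' <;> subst h' <;> exact huS (by simp [hS])
        · rw [h] at hwadj
          rcases hu1n u hwadj.symm with h' | h' <;> subst h' <;> exact huS (by simp [hS])
        · rw [h] at hwadj
          rcases hu2n u hwadj.symm with h' | h' <;> subst h' <;> exact huS (by simp [hS])
      have hcount : S.ncard + (IsoNew G S).ncard ≤ 6 := by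
        rw [hIso, Set.ncard_empty]
        have h1 : S.ncard ≤ 6 := by
          rw [hS]
          have i5 := Set.ncard_insert_le u1 ({u2} : Set V)
          have i4 := Set.ncard_insert_le y' ({u1, u2} : Set V)
          have i3 := Set.ncard_insert_le x' ({y', u1, u2} : Set V)
          have i2 := Set.ncard_insert_le y ({x', y', u1, u2} : Set V)
          have i1 := Set.ncard_insert_le x ({y, x', y', u1, u2} : Set V)
          simp only [Set.ncard_singleton] at i5
          omega
        omega
      exact key2 hsub hbad hmin S hadj (by simp [hS]) (by simp [hS])
        (fun w hw => by
          have hu : w ∈ G.neighborSet x := hw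
          rw [hNx] at hu
          rcases hu with h' | h' <;> subst h' <;> simp [hS])
        (fun w hw => by
          have hu : w ∈ G.neighborSet y := hw
          rw [hNy] at hu
          rcases hu with h' | h' <;> subst h' <;> simp [hS])
        hcount
    · -- u2 pendant on x'
      exact case3pendant hsub hbad hmin hadj hNx hNy hyx' hxy' hu2 hu1 (Ne.symm h12)
        hu2n hu1n hx'y' ha2 h2x h2y h1x h1y
  · -- u1 pendant on x'
    exact case3pendant hsub hbad hmin hadj hNx hNy hyx' hxy' hu1 hu2 h12
      hu1n hu2n hx'y' ha1 h1x h1y h2x h2y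


/-- In a minimum-order subcubic counterexample to ν_s ≥ (n − i − n⁺₃₃)/6,
no two vertices of degree 2 are adjacent. -/
theorem stmt_9 {V : Type} [Fintype V] (G : SimpleGraph V)
    (hsub : ∀ v, (G.neighborSet v).ncard ≤ 3)
    (hbad : (nu_s G : ℚ) < ((Nat.card V : ℚ) - (isolCount G : ℚ) - (n33plus G : ℚ)) / 6)
    (hmin : ∀ n < Nat.card V, ∀ H : SimpleGraph (Fin n),
      (∀ v, (H.neighborSet v).ncard ≤ 3) →
      (nu_s H : ℚ) ≥ ((n : ℚ) - (isolCount H : ℚ) - (n33plus H : ℚ)) / 6) :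
    ∀ x y, (G.neighborSet x).ncard = 2 → (G.neighborSet y).ncard = 2 → ¬ G.Adj x y := by
  intro x y hdx hdy hadj
  classical
  obtain ⟨x', hyx', hNx⟩ : ∃ x', y ≠ x' ∧ G.neighborSet x = {y, x'} := by
    obtain ⟨u, v, huv, hN⟩ := Set.ncard_eq_two.mp hdx
    have hy : y ∈ G.neighborSet x := hadj
    rw [hN] at hy
    rcases hy with rfl | rfl
    · exact ⟨v, huv, hN⟩
    · exact ⟨u, Ne.symm huv, by rw [hN, Set.pair_comm]⟩
  obtain ⟨y', hxy', hNy⟩ : ∃ y', x ≠ y' ∧ G.neighborSet y = {x, y'} := by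
    obtain ⟨u, v, huv, hN⟩ := Set.ncard_eq_two.mp hdy
    have hy : x ∈ G.neighborSet y := hadj.symm
    rw [hN] at hy
    rcases hy with rfl | rfl
    · exact ⟨v, huv, hN⟩
    · exact ⟨u, Ne.symm huv, by rw [hN, Set.pair_comm]⟩
  have hxx' : G.Adj x x' := by
    have : x' ∈ G.neighborSet x := by rw [hNx]; simp
    exact this
  have hyy' : G.Adj y y' := by
    have : y' ∈ G.neighborSet y := by rw [hNy]; simp
    exact this
  have hxy : x ≠ y := G.ne_of_adj hadj
  have hxne : x ≠ x' := G.ne_of_adj hxx'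
  have hyne : y ≠ y' := G.ne_of_adj hyy'
  by_cases hc1 : x' = y'
  · -- Case 1 : triangle
    subst hc1
    set S : Set V := {x, y, x'} with hS
    have hIsub : IsoNew G S ⊆ G.neighborSet x' \ {x, y} := by
      rintro u ⟨huS, ⟨w, hw⟩, hsubS⟩
      have hwadj : G.Adj u w := hw
      have hwS := hsubS hw
      rcases hwS with h | h | h
      · rw [h] at hwadj
        have hu : u ∈ G.neighborSet x := hwadj.symm
        rw [hNx] at hu
        rcases hu with h' | h' <;> subst h' <;> exact absurd (by simp [hS]) huS
      · rw [h] at hwadj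
        have hu : u ∈ G.neighborSet y := hwadj.symm
        rw [hNy] at hu
        rcases hu with h' | h' <;> subst h' <;> exact absurd (by simp [hS]) huS
      · rw [h] at hwadj
        refine ⟨hwadj.symm, ?_⟩
        simp only [Set.mem_insert_iff, Set.mem_singleton_iff]
        push_neg
        constructor
        · intro h'; exact huS (by rw [h']; simp [hS])
        · intro h'; exact huS (by rw [h']; simp [hS])
    have hpairsub : ({x, y} : Set V) ⊆ G.neighborSet x' := by
      rintro w (rfl | rfl)
      · exact hxx'.symm
      · exact hyy'.symm
    have hIcard : (IsoNew G S).ncard ≤ 1 := by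
      refine le_trans (Set.ncard_le_ncard hIsub (Set.toFinite _)) ?_
      rw [Set.ncard_diff hpairsub (Set.toFinite _), Set.ncard_pair hxy]
      have := hsub x'
      omega
    have hcount : S.ncard + (IsoNew G S).ncard ≤ 6 := by
      have h1 : S.ncard ≤ 3 := by
        rw [hS]
        have i2 := Set.ncard_insert_le y ({x'} : Set V)
        have i1 := Set.ncard_insert_le x ({y, x'} : Set V)
        simp only [Set.ncard_singleton] at i2
        omega
      omega
    exact key2 hsub hbad hmin S hadj (by simp [hS]) (by simp [hS])
      (fun w hw => by
        have hu : w ∈ G.neighborSet x := hw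
        rw [hNx] at hu
        rcases hu with h' | h' <;> subst h' <;> simp [hS])
      (fun w hw => by
        have hu : w ∈ G.neighborSet y := hw
        rw [hNy] at hu
        rcases hu with h' | h' <;> subst h' <;> simp [hS])
      hcount
  · by_cases hc2 : G.Adj x' y'
    · -- Case 2 : x' adjacent to y'
      set S : Set V := {x, y, x', y'} with hS
      have hIsub : IsoNew G S ⊆ (G.neighborSet x' \ {x, y'}) ∪ (G.neighborSet y' \ {y, x'}) := by
        rintro u ⟨huS, ⟨w, hw⟩, hsubS⟩
        have hwadj : G.Adj u w := hw
        have hwS := hsubS hw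
        rcases hwS with h | h | h | h
        · rw [h] at hwadj
          have hu : u ∈ G.neighborSet x := hwadj.symm
          rw [hNx] at hu
          rcases hu with h' | h' <;> subst h' <;> exact absurd (by simp [hS]) huS
        · rw [h] at hwadj
          have hu : u ∈ G.neighborSet y := hwadj.symm
          rw [hNy] at hu
          rcases hu with h' | h' <;> subst h' <;> exact absurd (by simp [hS]) huS
        · rw [h] at hwadj
          left
          refine ⟨hwadj.symm, ?_⟩
          simp only [Set.mem_insert_iff, Set.mem_singleton_iff]
          push_neg
          constructor
          · intro h'; exact huS (by rw [h']; simp [hS])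
          · intro h'; exact huS (by rw [h']; simp [hS])
        · rw [h] at hwadj
          right
          refine ⟨hwadj.symm, ?_⟩
          simp only [Set.mem_insert_iff, Set.mem_singleton_iff]
          push_neg
          constructor
          · intro h'; exact huS (by rw [h']; simp [hS])
          · intro h'; exact huS (by rw [h']; simp [hS])
      have hIcard : (IsoNew G S).ncard ≤ 2 := by
        refine le_trans (Set.ncard_le_ncard hIsub (Set.toFinite _)) ?_
        refine le_trans (Set.ncard_union_le _ _) ?_
        have d1 : ({x, y'} : Set V) ⊆ G.neighborSet x' := by
          rintro w (rfl | rfl)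
          · exact hxx'.symm
          · exact hc2
        have d2 : ({y, x'} : Set V) ⊆ G.neighborSet y' := by
          rintro w (rfl | rfl)
          · exact hyy'.symm
          · exact hc2.symm
        rw [Set.ncard_diff d1 (Set.toFinite _), Set.ncard_diff d2 (Set.toFinite _),
          Set.ncard_pair hxy', Set.ncard_pair hyx']
        have e1 := hsub x'
        have e2 := hsub y'
        omega
      have hcount : S.ncard + (IsoNew G S).ncard ≤ 6 := by
        have h1 : S.ncard ≤ 4 := by
          rw [hS]
          have i3 := Set.ncard_insert_le x' ({y'} : Set V)
          have i2 := Set.ncard_insert_le y ({x', y'} : Set V)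
          have i1 := Set.ncard_insert_le x ({y, x', y'} : Set V)
          simp only [Set.ncard_singleton] at i3
          omega
        omega
      exact key2 hsub hbad hmin S hadj (by simp [hS]) (by simp [hS])
        (fun w hw => by
          have hu : w ∈ G.neighborSet x := hw
          rw [hNx] at hu
          rcases hu with h' | h' <;> subst h' <;> simp [hS])
        (fun w hw => by
          have hu : w ∈ G.neighborSet y := hw
          rw [hNy] at hu
          rcases hu with h' | h' <;> subst h' <;> simp [hS])
        hcount
    · -- Case 3
      set S : Set V := {x, y, x', y'} with hS
      have hIn : ∀ u ∈ IsoNew G S, ∀ w, G.Adj u w → w = x' ∨ w = y' := by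
        rintro u ⟨huS, -, hsubS⟩ w hw
        have hwS : w ∈ S := hsubS hw
        rcases hwS with h | h | h | h
        · exfalso
          rw [h] at hw
          have hu : u ∈ G.neighborSet x := hw.symm
          rw [hNx] at hu
          rcases hu with h' | h' <;> subst h' <;> exact huS (by simp [hS])
        · exfalso
          rw [h] at hw
          have hu : u ∈ G.neighborSet y := hw.symm
          rw [hNy] at hu
          rcases hu with h' | h' <;> subst h' <;> exact huS (by simp [hS])
        · exact Or.inl h
        · exact Or.inr h
      have hInS : ∀ u ∈ IsoNew G S, u ≠ x ∧ u ≠ y ∧ u ≠ x' ∧ u ≠ y' := by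
        rintro u ⟨huS, -, -⟩
        refine ⟨?_, ?_, ?_, ?_⟩ <;> intro h <;> exact huS (by rw [h]; simp [hS])
      by_cases hA : ∃ u1 u2, u1 ≠ u2 ∧ (u1 ∈ IsoNew G S ∧ G.Adj x' u1) ∧
          (u2 ∈ IsoNew G S ∧ G.Adj x' u2)
      · obtain ⟨u1, u2, h12, ⟨hm1, hadj1⟩, ⟨hm2, hadj2⟩⟩ := hA
        obtain ⟨e1x, e1y, -, -⟩ := hInS u1 hm1
        obtain ⟨e2x, e2y, -, -⟩ := hInS u2 hm2
        exact case3core hsub hbad hmin hadj hNx hNy hyx' hxy' hc1 hadj1 hadj2 h12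
          (hIn u1 hm1) (hIn u2 hm2) e1x e1y e2x e2y
      · by_cases hB : ∃ u1 u2, u1 ≠ u2 ∧ (u1 ∈ IsoNew G S ∧ G.Adj y' u1) ∧
            (u2 ∈ IsoNew G S ∧ G.Adj y' u2)
        · obtain ⟨u1, u2, h12, ⟨hm1, hadj1⟩, ⟨hm2, hadj2⟩⟩ := hB
          obtain ⟨e1x, e1y, -, -⟩ := hInS u1 hm1
          obtain ⟨e2x, e2y, -, -⟩ := hInS u2 hm2
          exact case3core hsub hbad hmin hadj.symm hNy hNx hxy' hyx' (Ne.symm hc1)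
            hadj1 hadj2 h12
            (fun w hw => (hIn u1 hm1 w hw).symm) (fun w hw => (hIn u2 hm2 w hw).symm)
            e1y e1x e2y e2x
        · -- few new isolated vertices
          have hIsub : IsoNew G S ⊆ {u | u ∈ IsoNew G S ∧ G.Adj x' u} ∪
              {u | u ∈ IsoNew G S ∧ G.Adj y' u} := by
            intro u hu
            obtain ⟨huS, ⟨w, hw⟩, hsubS⟩ := hu
            rcases hIn u ⟨huS, ⟨w, hw⟩, hsubS⟩ w hw with h | h
            · left; exact ⟨⟨huS, ⟨w, hw⟩, hsubS⟩, by rw [h] at hw; exact hw.symm⟩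
            · right; exact ⟨⟨huS, ⟨w, hw⟩, hsubS⟩, by rw [h] at hw; exact hw.symm⟩
          have hIcard : (IsoNew G S).ncard ≤ 2 := by
            refine le_trans (Set.ncard_le_ncard hIsub (Set.toFinite _)) ?_
            refine le_trans (Set.ncard_union_le _ _) ?_
            have c1 : ({u | u ∈ IsoNew G S ∧ G.Adj x' u}).ncard ≤ 1 := by
              apply ncard_le_one_of_sub
              intro a ha b hb
              by_contra hne
              exact hA ⟨a, b, hne, ha, hb⟩
            have c2 : ({u | u ∈ IsoNew G S ∧ G.Adj y' u}).ncard ≤ 1 := by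
              apply ncard_le_one_of_sub
              intro a ha b hb
              by_contra hne
              exact hB ⟨a, b, hne, ha, hb⟩
            omega
          have hcount : S.ncard + (IsoNew G S).ncard ≤ 6 := by
            have h1 : S.ncard ≤ 4 := by
              rw [hS]
              have i3 := Set.ncard_insert_le x' ({y'} : Set V)
              have i2 := Set.ncard_insert_le y ({x', y'} : Set V)
              have i1 := Set.ncard_insert_le x ({y, x', y'} : Set V)
              simp only [Set.ncard_singleton] at i3
              omega
            omega
          exact key2 hsub hbad hmin S hadj (by simp [hS]) (by simp [hS])
            (fun w hw => by
              have hu : w ∈ G.neighborSet x := hw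
              rw [hNx] at hu
              rcases hu with h' | h' <;> subst h' <;> simp [hS])
            (fun w hw => by
              have hu : w ∈ G.neighborSet y := hw
              rw [hNy] at hu
              rcases hu with h' | h' <;> subst h' <;> simp [hS])
            hcount
end Cases
end Basics
end

section
/- If G is a cubic graph of girth at least 5 and uv is an edge of G, then the graph G' = G − (N[u] ∪ N[v]) has no isolated vertices. -/
open SimpleGraph

lemma no_c4 {V : Type} {G : SimpleGraph V} (hg : 5 ≤ G.egirth)
    {a b c d : V} (hab : G.Adj a b) (hbc : G.Adj b c) (hcd : G.Adj c d)
    (hda : G.Adj d a) (hac : a ≠ c) (hbd : b ≠ d) : False := by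
  have hw : (Walk.cons hab (Walk.cons hbc (Walk.cons hcd (Walk.cons hda Walk.nil)))).IsCycle := by
    have h1 := hab.ne; have h2 := hbc.ne; have h3 := hcd.ne; have h4 := hda.ne
    simp [Walk.isCycle_def, Walk.isTrail_def, Sym2.eq, Sym2.rel_iff']
    aesop
  have h := le_egirth.mp hg a _ hw
  simp only [Walk.length_cons, Walk.length_nil] at h
  norm_num at h

/-- In a cubic graph of girth at least 5, deleting N[u] ∪ N[v] for an edge uv
leaves no isolated vertices. -/
theorem stmt_11 {V : Type} [Fintype V] (G : SimpleGraph V)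
    (hcubic : ∀ w, (G.neighborSet w).ncard = 3) (hg : 5 ≤ G.egirth)
    (u v : V) (huv : G.Adj u v) :
    ∀ w ∈ (insert u (G.neighborSet u) ∪ insert v (G.neighborSet v))ᶜ,
      ∃ x ∈ (insert u (G.neighborSet u) ∪ insert v (G.neighborSet v))ᶜ, G.Adj w x := by
  intro w hw
  by_contra hcon
  push_neg at hcon
  simp only [Set.mem_compl_iff, Set.mem_union, Set.mem_insert_iff, mem_neighborSet,
    not_or] at hw hcon
  obtain ⟨⟨hwu, hwu'⟩, hwv, hwv'⟩ := hw
  -- every neighbor of w is adjacent to u or to v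
  have key : ∀ x, G.Adj w x → G.Adj u x ∨ G.Adj v x := by
    intro x hx
    have := hcon x
    by_contra hne
    push_neg at hne
    apply this _ hx
    constructor
    · exact ⟨fun h => hwu' (h ▸ hx).symm, fun h => hne.1 h⟩
    · exact ⟨fun h => hwv' (h ▸ hx).symm, fun h => hne.2 h⟩
  obtain ⟨a, b, c, hab, hac, hbc, hset⟩ := Set.ncard_eq_three.mp (hcubic w)
  have ha : G.Adj w a := by have : a ∈ G.neighborSet w := by rw [hset]; simp
                            exact this
  have hb : G.Adj w b := by have : b ∈ G.neighborSet w := by rw [hset]; simp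
                            exact this
  have hc : G.Adj w c := by have : c ∈ G.neighborSet w := by rw [hset]; simp
                            exact this
  have hwu2 : u ≠ w := fun h => hwu h.symm
  have hwv2 : v ≠ w := fun h => hwv h.symm
  rcases key a ha with h1 | h1 <;> rcases key b hb with h2 | h2 <;>
    rcases key c hc with h3 | h3
  · exact no_c4 hg h1 ha.symm hb h2.symm hwu2 hab
  · exact no_c4 hg h1 ha.symm hb h2.symm hwu2 hab
  · exact no_c4 hg h1 ha.symm hc h3.symm hwu2 hac
  · exact no_c4 hg h2 hb.symm hc h3.symm hwv2 hbc
  · exact no_c4 hg h2 hb.symm hc h3.symm hwu2 hbc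
  · exact no_c4 hg h1 ha.symm hc h3.symm hwv2 hac
  · exact no_c4 hg h1 ha.symm hb h2.symm hwv2 hab
  · exact no_c4 hg h1 ha.symm hb h2.symm hwv2 hab
end

section
/- For every even Δ ≥ 4, the graph G obtained from a cycle of length 5 by replacing every vertex with an independent set of Δ/2 vertices (with complete bipartite joins between consecutive sets) is Δ-regular, has order 5Δ/2, and satisfies ν_s(G) = 1. -/
open SimpleGraph

/-- The blow-up of C₅ where every vertex is replaced by an independent set of r
vertices, with complete bipartite joins between consecutive classes. -/
def C5blowup (r : ℕ) : SimpleGraph (ZMod 5 × Fin r) where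
  Adj x y := x.1 = y.1 + 1 ∨ y.1 = x.1 + 1
  symm := ⟨fun x y h => h.symm⟩
  loopless := ⟨fun x h => by
    rcases h with h | h <;> simp [left_eq_add] at h <;> exact absurd h (by decide)⟩

lemma zmod5_key : ∀ p q s t : ZMod 5, (p = q+1 ∨ q = p+1) → (s = t+1 ∨ t = s+1) →
    ¬(p = s+1 ∨ s = p+1) → ¬(p = t+1 ∨ t = p+1) → ¬(q = s+1 ∨ s = q+1) →
    ¬(q = t+1 ∨ t = q+1) → False := by decide

lemma matching_subsingleton {r : ℕ} {M : Set (Sym2 (ZMod 5 × Fin r))}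
    (hM : IsInducedMatching (C5blowup r) M) : M.Subsingleton := by
  intro e he f hf
  by_contra hne
  induction e using Sym2.ind with | _ a b =>
  induction f using Sym2.ind with | _ c d =>
  have hab : (C5blowup r).Adj a b := (SimpleGraph.mem_edgeSet _).mp (hM.1 he)
  have hcd : (C5blowup r).Adj c d := (SimpleGraph.mem_edgeSet _).mp (hM.1 hf)
  have h1 := hM.2 _ he _ hf hne a (by simp) c (by simp)
  have h2 := hM.2 _ he _ hf hne a (by simp) d (by simp)
  have h3 := hM.2 _ he _ hf hne b (by simp) c (by simp)
  have h4 := hM.2 _ he _ hf hne b (by simp) d (by simp)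
  exact zmod5_key a.1 b.1 c.1 d.1 hab hcd h1.2 h2.2 h3.2 h4.2

lemma neighborSet_eq (r : ℕ) (v : ZMod 5 × Fin r) :
    (C5blowup r).neighborSet v =
      (fun j => ((v.1 + 1 : ZMod 5), j)) '' Set.univ ∪
      (fun j => ((v.1 - 1 : ZMod 5), j)) '' Set.univ := by
  ext y
  simp only [SimpleGraph.mem_neighborSet, Set.mem_union, Set.image_univ, Set.mem_range]
  constructor
  · rintro (h | h)
    · right; exact ⟨y.2, by rw [← Prod.mk.eta (p := y)]; congr 1; rw [h]; ring⟩
    · left; exact ⟨y.2, by rw [← Prod.mk.eta (p := y)]; congr 1; rw [h]⟩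
  · rintro (⟨j, rfl⟩ | ⟨j, rfl⟩)
    · right; rfl
    · left; simp only [C5blowup]; ring_nf

/-- For even Δ ≥ 4, the C₅-blow-up with classes of size Δ/2 is Δ-regular,
has order 5Δ/2, and has strong matching number 1. -/
theorem stmt_12 (Δ : ℕ) (hΔ : 4 ≤ Δ) (heven : Even Δ) :
    (∀ v, ((C5blowup (Δ / 2)).neighborSet v).ncard = Δ) ∧
    Nat.card (ZMod 5 × Fin (Δ / 2)) = 5 * Δ / 2 ∧
    nu_s (C5blowup (Δ / 2)) = 1 := by
  obtain ⟨m, rfl⟩ := heven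
  have hm : 2 ≤ m := by omega
  have hd : (m + m) / 2 = m := by omega
  refine ⟨?_, ?_, ?_⟩
  · intro v
    rw [neighborSet_eq]
    have hinj1 : Function.Injective (fun j : Fin ((m+m)/2) => ((v.1 + 1 : ZMod 5), j)) :=
      fun a b h => by simpa using congrArg Prod.snd h
    have hinj2 : Function.Injective (fun j : Fin ((m+m)/2) => ((v.1 - 1 : ZMod 5), j)) :=
      fun a b h => by simpa using congrArg Prod.snd h
    rw [Set.ncard_union_eq]
    · rw [Set.ncard_image_of_injective _ hinj1, Set.ncard_image_of_injective _ hinj2,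
        Set.ncard_univ]
      simp [hd]
    · rw [Set.disjoint_left]
      rintro x ⟨j, -, rfl⟩ ⟨k, -, hk⟩
      have : (v.1 - 1 : ZMod 5) = v.1 + 1 := congrArg Prod.fst hk
      have h2 : (1 : ZMod 5) = -1 := by linear_combination -this
      exact absurd h2 (by decide)
  · simp [Nat.card_eq_fintype_card, hd]; omega
  · have hr : 0 < (m + m) / 2 := by omega
    set r := (m + m) / 2
    have hub : ∀ k ∈ {k | ∃ M : Set (Sym2 (ZMod 5 × Fin r)),
        IsInducedMatching (C5blowup r) M ∧ M.ncard = k}, k ≤ 1 := by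
      rintro k ⟨M, hM, rfl⟩
      rcases (matching_subsingleton hM).eq_empty_or_singleton with h | ⟨e, h⟩ <;>
        simp [h]
    have hmem : 1 ∈ {k | ∃ M : Set (Sym2 (ZMod 5 × Fin r)),
        IsInducedMatching (C5blowup r) M ∧ M.ncard = k} := by
      refine ⟨{s(((0 : ZMod 5), ⟨0, hr⟩), ((1 : ZMod 5), ⟨0, hr⟩))}, ⟨?_, ?_⟩, by simp⟩
      · rintro e rfl
        exact Or.inr rfl
      · rintro e rfl f rfl hne
        exact absurd rfl hne
    refine le_antisymm (csSup_le ⟨1, hmem⟩ hub) (le_csSup ⟨1, hub⟩ hmem)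
end

section
/- If G is a graph with maximum degree Δ and m edges, then ν_s(G) ≥ m/(2Δ(Δ−1) + 1). -/
open SimpleGraph

open scoped Classical

/-- The number of edges "close" to a given edge `s(a,b)` is at most `2(d+1)d + 1`. -/
lemma count_close {V : Type} [Fintype V] {G : SimpleGraph V} {d : ℕ}
    (hdeg : ∀ v, G.degree v ≤ d + 1) (a b : V) (hab : G.Adj a b) :
    (G.edgeFinset.filter
      (fun e => ∃ u ∈ e, ∃ v ∈ (s(a,b) : Sym2 V), u = v ∨ G.Adj u v)).card
      ≤ 2 * (d + 1) * d + 1 := by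
  classical
  set incA := G.incidenceFinset a with hincA
  set incB := G.incidenceFinset b with hincB
  set B1 := ((G.neighborFinset a).erase b).biUnion
      (fun c => G.incidenceFinset c \ incA) with hB1
  set B2 := ((G.neighborFinset b).erase a).biUnion
      (fun c => G.incidenceFinset c \ incB) with hB2
  have hmemInc : ∀ (c : V) (e : Sym2 V), e ∈ G.incidenceFinset c ↔ e ∈ G.edgeSet ∧ c ∈ e := by
    intro c e; rw [mem_incidenceFinset]; rfl
  have hsub : G.edgeFinset.filter
      (fun e => ∃ u ∈ e, ∃ v ∈ (s(a,b) : Sym2 V), u = v ∨ G.Adj u v)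
      ⊆ incA ∪ incB.erase s(a,b) ∪ B1 ∪ B2 := by
    intro e he
    rw [Finset.mem_filter] at he
    obtain ⟨heE, u, hu, v, hv, hcl⟩ := he
    have heS : e ∈ G.edgeSet := by rwa [mem_edgeFinset] at heE
    simp only [Finset.mem_union]
    have hA : a ∈ e → (e ∈ incA ∨ e ∈ incB.erase s(a,b)) ∨ e ∈ B1 := by
      intro h; exact Or.inl (Or.inl ((hmemInc a e).2 ⟨heS, h⟩))
    have hB : b ∈ e → (e ∈ incA ∨ e ∈ incB.erase s(a,b)) ∨ e ∈ B1 := by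
      intro h
      by_cases hef : e = s(a,b)
      · exact hA (by rw [hef]; simp)
      · exact Or.inl (Or.inr (Finset.mem_erase.2 ⟨hef, (hmemInc b e).2 ⟨heS, h⟩⟩))
    have hN1 : G.Adj a u → u ≠ b → (e ∈ incA ∨ e ∈ incB.erase s(a,b)) ∨ e ∈ B1 := by
      intro hadj hub
      by_cases hae : a ∈ e
      · exact hA hae
      · refine Or.inr (Finset.mem_biUnion.2 ⟨u, ?_, ?_⟩)
        · exact Finset.mem_erase.2 ⟨hub, (mem_neighborFinset G a u).2 hadj⟩
        · refine Finset.mem_sdiff.2 ⟨(hmemInc u e).2 ⟨heS, hu⟩, ?_⟩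
          intro hmem
          exact hae ((hmemInc a e).1 hmem).2
    have hN2 : G.Adj b u → u ≠ a → ((e ∈ incA ∨ e ∈ incB.erase s(a,b)) ∨ e ∈ B1) ∨ e ∈ B2 := by
      intro hadj hua
      by_cases hbe : b ∈ e
      · exact Or.inl (hB hbe)
      · refine Or.inr (Finset.mem_biUnion.2 ⟨u, ?_, ?_⟩)
        · exact Finset.mem_erase.2 ⟨hua, (mem_neighborFinset G b u).2 hadj⟩
        · refine Finset.mem_sdiff.2 ⟨(hmemInc u e).2 ⟨heS, hu⟩, ?_⟩
          intro hmem
          exact hbe ((hmemInc b e).1 hmem).2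
    rcases Sym2.mem_iff.1 hv with rfl | rfl
    · rcases hcl with rfl | hadj
      · exact Or.inl (hA hu)
      · by_cases hub : u = b
        · exact Or.inl (hB (hub ▸ hu))
        · exact Or.inl (hN1 hadj.symm hub)
    · rcases hcl with rfl | hadj
      · exact Or.inl (hB hu)
      · by_cases hua : u = a
        · exact Or.inl (hA (hua ▸ hu))
        · exact hN2 hadj.symm hua
  have hcardInc : ∀ c, (G.incidenceFinset c).card ≤ d + 1 := by
    intro c; rw [card_incidenceFinset_eq_degree]; exact hdeg c
  have hcard_sdiff : ∀ (c x : V), G.Adj x c →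
      (G.incidenceFinset c \ G.incidenceFinset x).card ≤ d := by
    intro c x hxc
    have hmem : s(x,c) ∈ G.incidenceFinset c := by
      rw [mem_incidenceFinset]
      exact ⟨hxc, Sym2.mem_mk_right x c⟩
    have hmem' : s(x,c) ∈ G.incidenceFinset x := by
      rw [mem_incidenceFinset]
      exact ⟨hxc, Sym2.mem_mk_left x c⟩
    have hsub' : G.incidenceFinset c \ G.incidenceFinset x
        ⊆ (G.incidenceFinset c).erase s(x,c) := by
      intro e he
      rw [Finset.mem_sdiff] at he
      exact Finset.mem_erase.2 ⟨fun h => he.2 (h ▸ hmem'), he.1⟩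
    calc (G.incidenceFinset c \ G.incidenceFinset x).card
        ≤ ((G.incidenceFinset c).erase s(x,c)).card := Finset.card_le_card hsub'
      _ = (G.incidenceFinset c).card - 1 := Finset.card_erase_of_mem hmem
      _ ≤ d := by have := hcardInc c; omega
  have hcardA : incA.card ≤ d + 1 := hcardInc a
  have habB : s(a,b) ∈ incB := by
    rw [hincB, mem_incidenceFinset]
    exact ⟨hab, Sym2.mem_mk_right a b⟩
  have hcardBe : (incB.erase s(a,b)).card ≤ d := by
    rw [Finset.card_erase_of_mem habB]
    have := hcardInc b; rw [← hincB] at this; omega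
  have hdegFin : ∀ c, (G.neighborFinset c).card ≤ d + 1 := by
    intro c; rw [card_neighborFinset_eq_degree]; exact hdeg c
  have hcardB1 : B1.card ≤ d * d := by
    calc B1.card ≤ ∑ c ∈ (G.neighborFinset a).erase b, (G.incidenceFinset c \ incA).card :=
          Finset.card_biUnion_le
      _ ≤ ((G.neighborFinset a).erase b).card • d := by
          apply Finset.sum_le_card_nsmul
          intro c hc
          exact hcard_sdiff c a ((mem_neighborFinset G a c).1 (Finset.mem_of_mem_erase hc))
      _ ≤ d * d := by
          rw [smul_eq_mul]
          apply Nat.mul_le_mul_right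
          have h1 : b ∈ G.neighborFinset a := (mem_neighborFinset G a b).2 hab
          have := hdegFin a
          have := Finset.card_erase_of_mem h1
          omega
  have hcardB2 : B2.card ≤ d * d := by
    calc B2.card ≤ ∑ c ∈ (G.neighborFinset b).erase a, (G.incidenceFinset c \ incB).card :=
          Finset.card_biUnion_le
      _ ≤ ((G.neighborFinset b).erase a).card • d := by
          apply Finset.sum_le_card_nsmul
          intro c hc
          exact hcard_sdiff c b ((mem_neighborFinset G b c).1 (Finset.mem_of_mem_erase hc))
      _ ≤ d * d := by
          rw [smul_eq_mul]
          apply Nat.mul_le_mul_right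
          have h1 : a ∈ G.neighborFinset b := (mem_neighborFinset G b a).2 hab.symm
          have := hdegFin b
          have := Finset.card_erase_of_mem h1
          omega
  calc (G.edgeFinset.filter
      (fun e => ∃ u ∈ e, ∃ v ∈ (s(a,b) : Sym2 V), u = v ∨ G.Adj u v)).card
      ≤ (incA ∪ incB.erase s(a,b) ∪ B1 ∪ B2).card := Finset.card_le_card hsub
    _ ≤ (incA ∪ incB.erase s(a,b) ∪ B1).card + B2.card := Finset.card_union_le _ _
    _ ≤ (incA ∪ incB.erase s(a,b)).card + B1.card + B2.card := by
        have := Finset.card_union_le (incA ∪ incB.erase s(a,b)) B1; omega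
    _ ≤ incA.card + (incB.erase s(a,b)).card + B1.card + B2.card := by
        have := Finset.card_union_le incA (incB.erase s(a,b)); omega
    _ ≤ (d+1) + d + d*d + d*d := by omega
    _ ≤ 2 * (d + 1) * d + 1 := by nlinarith

/-- A graph with maximum degree Δ and m edges satisfies ν_s ≥ m/(2Δ(Δ−1) + 1). -/
theorem stmt_15 {V : Type} [Fintype V] (G : SimpleGraph V)
    (Δ : ℕ) (hdeg : ∀ v, (G.neighborSet v).ncard ≤ Δ) :
    (nu_s G : ℚ) ≥ (G.edgeSet.ncard : ℚ) / (2 * (Δ : ℚ) * ((Δ : ℚ) - 1) + 1) := by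
  classical
  -- trivial case: no edges
  by_cases hm : G.edgeSet.ncard = 0
  · rw [hm]
    simp only [Nat.cast_zero, zero_div, ge_iff_le]
    positivity
  -- there is an edge, so Δ ≥ 1
  have hne : G.edgeSet.Nonempty := Set.nonempty_of_ncard_ne_zero hm
  obtain ⟨e₀, he₀⟩ := hne
  induction e₀ using Sym2.ind with
  | _ x y =>
  have hxy : G.Adj x y := G.mem_edgeSet.1 he₀
  have hΔ1 : 1 ≤ Δ := by
    have h1 : 1 ≤ (G.neighborSet x).ncard := by
      rw [Nat.one_le_iff_ne_zero]
      intro h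
      have := Set.nonempty_of_ncard_ne_zero (s := G.neighborSet x)
      have hy : y ∈ G.neighborSet x := hxy
      have : (G.neighborSet x).ncard ≠ 0 := by
        apply Set.ncard_ne_zero_of_mem hy (Set.toFinite _)
      exact this h
    exact le_trans h1 (hdeg x)
  obtain ⟨d, rfl⟩ : ∃ d, Δ = d + 1 := ⟨Δ - 1, by omega⟩
  have hdeg' : ∀ v, G.degree v ≤ d + 1 := by
    intro v
    have := hdeg v
    rwa [Set.ncard_eq_toFinset_card', ← neighborFinset_def, ← SimpleGraph.degree] at this
  -- the set defining nu_s
  set S := {k | ∃ M : Set (Sym2 V), IsInducedMatching G M ∧ M.ncard = k} with hS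
  have h0 : (0 : ℕ) ∈ S := ⟨∅, ⟨Set.empty_subset _, fun e he => absurd he (Set.notMem_empty e)⟩,
      Set.ncard_empty _⟩
  have hbdd : BddAbove S := by
    refine ⟨G.edgeSet.ncard, fun k hk => ?_⟩
    obtain ⟨M, hM, rfl⟩ := hk
    exact Set.ncard_le_ncard hM.1 (Set.toFinite _)
  have hsup : nu_s G ∈ S := Nat.sSup_mem ⟨0, h0⟩ hbdd
  obtain ⟨M, hM, hMcard⟩ := hsup
  have hMfin : M.Finite := Set.Finite.subset (Set.toFinite _) hM.1
  have hmax : ∀ M' : Set (Sym2 V), IsInducedMatching G M' → M'.ncard ≤ nu_s G := by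
    intro M' h
    exact le_csSup hbdd ⟨M', h, rfl⟩
  -- every edge is close to some matching edge
  have hclose : ∀ e ∈ G.edgeSet, ∃ f ∈ M, ∃ u ∈ e, ∃ v ∈ f, u = v ∨ G.Adj u v := by
    intro e he
    by_contra hcon
    push_neg at hcon
    have heM : e ∉ M := by
      intro heM
      have hp : e.out.1 ∈ e := Sym2.out_fst_mem e
      exact (hcon e heM _ hp _ hp).1 rfl
    have hM' : IsInducedMatching G (insert e M) := by
      constructor
      · exact Set.insert_subset he hM.1
      · intro e' he' f' hf' hne u hu v hv
        rcases Set.mem_insert_iff.1 he' with rfl | he'M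
        · rcases Set.mem_insert_iff.1 hf' with rfl | hf'M
          · exact absurd rfl hne
          · exact hcon f' hf'M u hu v hv
        · rcases Set.mem_insert_iff.1 hf' with rfl | hf'M
          · have := hcon e' he'M v hv u hu
            exact ⟨Ne.symm this.1, fun h => this.2 h.symm⟩
          · exact hM.2 e' he'M f' hf'M hne u hu v hv
    have : (insert e M).ncard ≤ nu_s G := hmax _ hM'
    rw [Set.ncard_insert_of_notMem heM hMfin, hMcard] at this
    omega
  -- counting
  set K := 2 * (d + 1) * d + 1 with hK
  have hcount : G.edgeSet.ncard ≤ nu_s G * K := by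
    have hsubsetB : G.edgeFinset ⊆ hMfin.toFinset.biUnion
        (fun f => G.edgeFinset.filter (fun e => ∃ u ∈ e, ∃ v ∈ f, u = v ∨ G.Adj u v)) := by
      intro e he
      have heS : e ∈ G.edgeSet := by rwa [mem_edgeFinset] at he
      obtain ⟨f, hfM, hcl⟩ := hclose e heS
      exact Finset.mem_biUnion.2 ⟨f, hMfin.mem_toFinset.2 hfM,
        Finset.mem_filter.2 ⟨he, hcl⟩⟩
    have hcard1 : G.edgeFinset.card ≤
        ∑ f ∈ hMfin.toFinset,
          (G.edgeFinset.filter (fun e => ∃ u ∈ e, ∃ v ∈ f, u = v ∨ G.Adj u v)).card :=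
      le_trans (Finset.card_le_card hsubsetB) Finset.card_biUnion_le
    have hcard2 : ∀ f ∈ hMfin.toFinset,
        (G.edgeFinset.filter (fun e => ∃ u ∈ e, ∃ v ∈ f, u = v ∨ G.Adj u v)).card ≤ K := by
      intro f hf
      have hfM : f ∈ M := hMfin.mem_toFinset.1 hf
      have hfE : f ∈ G.edgeSet := hM.1 hfM
      induction f using Sym2.ind with
      | _ p q =>
      have hpq : G.Adj p q := G.mem_edgeSet.1 hfE
      exact count_close hdeg' p q hpq
    have hsum : ∑ f ∈ hMfin.toFinset,
        (G.edgeFinset.filter (fun e => ∃ u ∈ e, ∃ v ∈ f, u = v ∨ G.Adj u v)).card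
        ≤ hMfin.toFinset.card * K := by
      have := Finset.sum_le_card_nsmul hMfin.toFinset _ K hcard2
      rwa [smul_eq_mul] at this
    have hMtf : hMfin.toFinset.card = nu_s G := by
      rw [← Set.ncard_eq_toFinset_card M hMfin, hMcard]
    have hedge : G.edgeSet.ncard = G.edgeFinset.card := by
      rw [Set.ncard_eq_toFinset_card', Set.toFinset_card, ← edgeFinset_card]
    rw [hedge, ← hMtf]
    exact le_trans hcard1 hsum
  -- conclude in ℚ
  have hden : (2 : ℚ) * ((d:ℚ)+1) * (((d:ℚ)+1) - 1) + 1 = (K : ℚ) := by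
    rw [hK]
    push_cast
    ring
  rw [ge_iff_le]
  have hKpos : (0 : ℚ) < (K : ℚ) := by
    rw [hK]; push_cast; positivity
  rw [Nat.cast_add, Nat.cast_one, hden, div_le_iff₀ hKpos]
  have : (G.edgeSet.ncard : ℚ) ≤ (nu_s G : ℚ) * (K : ℚ) := by
    exact_mod_cast hcount
  exact this
end
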